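/- arXiv:1007.4692 — 5 statements merged into one kernel-verified Lean document; each statement's English description precedes it below -/
import Mathlib

section
/- There exists a constant C > 0 such that for every n ≥ 1 and all a, b ∈ ℝⁿ, ‖F(a+b) − F(a) − F(b)‖₂ ≤ C·(‖a‖₂ + ‖b‖₂), i.e. the Kalton–Peck map F is quasi-linear with a constant independent of n. -/
open scoped BigOperators

/-- The Euclidean norm on `ℝⁿ`. -/
noncomputable def l2 {n : ℕ} (b : Fin n → ℝ) : ℝ := Real.sqrt (∑ j, b j ^ 2)

/-- The Kalton–Peck map `F(b)_j = b_j log(|b_j|/‖b‖₂)`, with `F(b)_j = 0` when `b_j = 0`. -/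
noncomputable def KPF {n : ℕ} (b : Fin n → ℝ) : Fin n → ℝ :=
  fun j => if b j = 0 then 0 else b j * Real.log (|b j| / l2 b)

/-- The Kalton–Peck quasi-norm `‖(a,b)‖ = ‖b‖₂ + ‖a - F(b)‖₂` on `ℝⁿ × ℝⁿ`. -/
noncomputable def znorm {n : ℕ} (x : (Fin n → ℝ) × (Fin n → ℝ)) : ℝ :=
  l2 x.2 + l2 (x.1 - KPF x.2)

/-- Operator "norm" `sup_{x ≠ 0} N_W(T x) / N_V(x)` of a map `T` between spaces
equipped with (quasi-)norms `N_V`, `N_W`. -/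
noncomputable def ratioSup {V W : Type*} [Zero V] (NV : V → ℝ) (NW : W → ℝ) (T : V → W) : ℝ :=
  ⨆ x : {x : V // x ≠ 0}, NW (T x.1) / NV x.1

/-! Because `Real.log` is even with `log 0 = 0`, `F(x)_j = φ(x_j) - log ‖x‖ · x_j` for `φ t = t log t`.
For `u, v ≥ 0` the additivity defect `φ(u+v) - φ u - φ v` equals
`u log((u+v)/u) + v log((u+v)/v) ∈ [0, u + v]` by `log y ≤ y - 1`, and since `φ` is odd every sign
pattern reduces to this one, giving `|φ(u+v) - φ u - φ v| ≤ |u| + |v|`. In the remaining terms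
`log ‖x‖ · x` the logarithm may be recentred at `log T` with `T = ‖a‖ + ‖b‖`, because
`(a + b) - a - b = 0`, and then `s |log s - log T| ≤ T` for `0 ≤ s ≤ T`. Altogether `C = 4` works. -/

open Real

lemma mul_log_sub_log_nonneg {u w : ℝ} (hu : 0 ≤ u) (huw : u ≤ w) : 0 ≤ u * (log w - log u) := by
  rcases hu.eq_or_lt with rfl | hu
  · simp
  · exact mul_nonneg hu.le (sub_nonneg.2 (log_le_log hu huw))

lemma mul_log_sub_log_le {u w : ℝ} (hu : 0 ≤ u) (huw : u ≤ w) : u * (log w - log u) ≤ w - u := by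
  rcases hu.eq_or_lt with rfl | hu
  · simpa using huw
  have hw : 0 < w := hu.trans_le huw
  have hlog : log w - log u ≤ w / u - 1 := by
    rw [← log_div hw.ne' hu.ne']
    exact log_le_sub_one_of_pos (div_pos hw hu)
  calc u * (log w - log u) ≤ u * (w / u - 1) := by gcongr
    _ = w - u := by field_simp

noncomputable def mulLogDefect (u v : ℝ) : ℝ := (u + v) * log (u + v) - u * log u - v * log v

lemma mulLogDefect_neg (u v : ℝ) : mulLogDefect (-u) (-v) = -mulLogDefect u v := by
  simp only [mulLogDefect, ← neg_add, log_neg_eq_log]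
  ring

lemma mulLogDefect_add_neg (u v : ℝ) : mulLogDefect (u + v) (-v) = -mulLogDefect u v := by
  simp only [mulLogDefect, add_neg_cancel_right, log_neg_eq_log]
  ring

lemma mulLogDefect_neg_add (u v : ℝ) : mulLogDefect u (-(u + v)) = mulLogDefect u v := by
  have hsum : u + -(u + v) = -v := by ring
  simp only [mulLogDefect, hsum, log_neg_eq_log]
  ring

lemma abs_mulLogDefect_le_of_nonneg {u v : ℝ} (hu : 0 ≤ u) (hv : 0 ≤ v) :
    |mulLogDefect u v| ≤ u + v := by
  have hsplit : mulLogDefect u v = u * (log (u + v) - log u) + v * (log (u + v) - log v) := by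
    unfold mulLogDefect; ring
  have hu' := mul_log_sub_log_le hu (le_add_of_nonneg_right hv)
  have hv' := mul_log_sub_log_le hv (le_add_of_nonneg_left hu)
  rw [hsplit, abs_of_nonneg (add_nonneg (mul_log_sub_log_nonneg hu (le_add_of_nonneg_right hv))
    (mul_log_sub_log_nonneg hv (le_add_of_nonneg_left hu)))]
  linarith

lemma abs_mulLogDefect_le_of_nonneg_left {u : ℝ} (hu : 0 ≤ u) (v : ℝ) :
    |mulLogDefect u v| ≤ |u| + |v| := by
  rcases le_total 0 v with hv | hv
  · simpa only [abs_of_nonneg hu, abs_of_nonneg hv] using abs_mulLogDefect_le_of_nonneg hu hv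
  rw [abs_of_nonneg hu, abs_of_nonpos hv]
  rcases le_total 0 (u + v) with huv | huv
  · have := abs_mulLogDefect_le_of_nonneg huv (neg_nonneg.2 hv)
    rw [mulLogDefect_add_neg, abs_neg] at this
    linarith
  · have := abs_mulLogDefect_le_of_nonneg hu (neg_nonneg.2 huv)
    rw [mulLogDefect_neg_add] at this
    linarith

lemma abs_mulLogDefect_le (u v : ℝ) : |mulLogDefect u v| ≤ |u| + |v| := by
  rcases le_total 0 u with hu | hu
  · exact abs_mulLogDefect_le_of_nonneg_left hu v
  · simpa only [mulLogDefect_neg, abs_neg] using abs_mulLogDefect_le_of_nonneg_left (neg_nonneg.2 hu) (-v)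

lemma l2_eq_norm {n : ℕ} (x : Fin n → ℝ) : l2 x = ‖WithLp.toLp 2 x‖ := by
  simp [l2, EuclideanSpace.norm_eq]

lemma l2_nonneg {n : ℕ} (x : Fin n → ℝ) : 0 ≤ l2 x := Real.sqrt_nonneg _

lemma abs_apply_le_l2 {n : ℕ} (x : Fin n → ℝ) (j : Fin n) : |x j| ≤ l2 x := by
  simpa [l2_eq_norm] using PiLp.norm_apply_le (WithLp.toLp 2 x) j

lemma l2_add_le {n : ℕ} (x y : Fin n → ℝ) : l2 (x + y) ≤ l2 x + l2 y := by
  simpa only [l2_eq_norm, WithLp.toLp_add] using norm_add_le _ _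

lemma l2_sub_le {n : ℕ} (x y : Fin n → ℝ) : l2 (x - y) ≤ l2 x + l2 y := by
  simpa only [l2_eq_norm, WithLp.toLp_sub] using norm_sub_le _ _

lemma l2_smul {n : ℕ} (c : ℝ) (x : Fin n → ℝ) : l2 (c • x) = |c| * l2 x := by
  simp only [l2_eq_norm, WithLp.toLp_smul, norm_smul, Real.norm_eq_abs]

lemma l2_abs {n : ℕ} (x : Fin n → ℝ) : l2 |x| = l2 x := by
  simp [l2, sq_abs]

lemma l2_le_l2_of_abs_le {n : ℕ} {x y : Fin n → ℝ} (h : ∀ j, |x j| ≤ y j) : l2 x ≤ l2 y :=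
  Real.sqrt_le_sqrt <| Finset.sum_le_sum fun j _ => sq_le_sq.2 ((h j).trans (le_abs_self _))

lemma KPF_apply {n : ℕ} (x : Fin n → ℝ) (j : Fin n) :
    KPF x j = x j * log (x j) - log (l2 x) * x j := by
  by_cases h : x j = 0
  · simp [KPF, h]
  have hl2 : l2 x ≠ 0 := ((abs_pos.2 h).trans_le (abs_apply_le_l2 x j)).ne'
  rw [KPF, if_neg h, log_div (abs_ne_zero.2 h) hl2, log_abs]
  ring

lemma abs_log_sub_log_mul_le {s T : ℝ} (hs : 0 ≤ s) (hsT : s ≤ T) : |log s - log T| * s ≤ T := by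
  rcases hs.eq_or_lt with rfl | hs
  · simpa using hsT
  rw [abs_sub_comm, abs_of_nonneg (sub_nonneg.2 (log_le_log hs hsT)), mul_comm]
  linarith [mul_log_sub_log_le hs.le hsT]

lemma l2_log_sub_smul_le {n : ℕ} {x : Fin n → ℝ} {T : ℝ} (hx : l2 x ≤ T) :
    l2 ((log (l2 x) - log T) • x) ≤ T := by
  rw [l2_smul]
  exact abs_log_sub_log_mul_le (l2_nonneg x) hx

lemma l2_mulLogDefect_le {n : ℕ} (a b : Fin n → ℝ) :
    l2 (fun j => mulLogDefect (a j) (b j)) ≤ l2 a + l2 b :=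
  calc l2 (fun j => mulLogDefect (a j) (b j)) ≤ l2 (|a| + |b|) :=
        l2_le_l2_of_abs_le fun j => abs_mulLogDefect_le (a j) (b j)
    _ ≤ l2 a + l2 b := by simpa only [l2_abs] using l2_add_le |a| |b|

lemma KPF_add_sub_sub {n : ℕ} (a b : Fin n → ℝ) (c : ℝ) :
    KPF (a + b) - KPF a - KPF b = (fun j => mulLogDefect (a j) (b j)) -
      ((log (l2 (a + b)) - c) • (a + b) - (log (l2 a) - c) • a - (log (l2 b) - c) • b) := by
  funext j
  simp only [Pi.sub_apply, Pi.add_apply, Pi.smul_apply, smul_eq_mul, KPF_apply, mulLogDefect]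
  ring

/-- The Kalton–Peck map `F` is quasi-linear with a constant independent of the dimension. -/
theorem kalton_peck_quasilinear :
    ∃ C : ℝ, 0 < C ∧ ∀ n : ℕ, 1 ≤ n → ∀ a b : Fin n → ℝ,
      l2 (KPF (a + b) - KPF a - KPF b) ≤ C * (l2 a + l2 b) := by
  refine ⟨4, by norm_num, fun n _ a b => ?_⟩
  set T := l2 a + l2 b
  set r : (Fin n → ℝ) → (Fin n → ℝ) := fun x => (log (l2 x) - log T) • x
  rw [KPF_add_sub_sub a b (log T)]
  have hD := l2_mulLogDefect_le a b
  have hab : l2 (r (a + b)) ≤ T := l2_log_sub_smul_le (l2_add_le a b)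
  have ha : l2 (r a) ≤ T := l2_log_sub_smul_le (le_add_of_nonneg_right (l2_nonneg b))
  have hb : l2 (r b) ≤ T := l2_log_sub_smul_le (le_add_of_nonneg_left (l2_nonneg a))
  linarith [l2_sub_le (fun j => mulLogDefect (a j) (b j)) (r (a + b) - r a - r b),
    l2_sub_le (r (a + b) - r a) (r b), l2_sub_le (r (a + b)) (r a)]
end

section
/- Let n ≥ 1 and let T : ℝⁿ×ℝⁿ → ℝⁿ×ℝⁿ be a linear map that splits, with block matrices (α_j, β_j; γ_j, δ_j). Then for every subset A ⊆ {1,…,n} with |A| = k ≥ 2, there exists a subset A' ⊆ A with |A'| ≥ k/2 such that max_{j∈A'} |γ_j| ≤ 4√2·‖T‖/log k. -/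
open scoped BigOperators

/-!
Put `k = #A`, `C = ratioSup znorm znorm T` and `1_A` for the indicator vector of `A`. Since
`F(1_A) = -log √k • 1_A`, the vector `x = (-log √k • 1_A, 1_A)` has quasi-norm `√k`, and by
splitting the second component of `T x` is `(-log √k • γ + δ) 1_A`, of `ℓ²`-norm at most `C √k`.
Each `|δ_j|` is at most `‖T (0, f_j)‖ ≤ C`, so `log k · ‖γ 1_A‖₂ ≤ 4 C √k`, i.e.
`∑_{j ∈ A} γ_j² ≤ 16 C² k / log² k`, and by Chebyshev's inequality at most `k / 2` indices of `A`
have `|γ_j| > 4 √2 C / log k`.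
-/

open Finset

lemma le_ratioSup_mul {V W : Type*} [Zero V] {NV : V → ℝ} {NW : W → ℝ} {T : V → W} {M : ℝ}
    (hM : ∀ x, NW (T x) ≤ M * NV x) (hpos : ∀ x, x ≠ 0 → 0 < NV x) {x : V} (hx : x ≠ 0) :
    NW (T x) ≤ ratioSup NV NW T * NV x := by
  have hbdd : BddAbove (Set.range fun y : {y : V // y ≠ 0} => NW (T y.1) / NV y.1) :=
    ⟨M, Set.forall_mem_range.2 fun y => (div_le_iff₀ (hpos y.1 y.2)).2 (hM y.1)⟩
  exact (div_le_iff₀ (hpos x hx)).1 (le_ciSup hbdd ⟨x, hx⟩)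

lemma ratioSup_nonneg {V W : Type*} [Zero V] {NV : V → ℝ} {NW : W → ℝ} (hV : ∀ x, 0 ≤ NV x)
    (hW : ∀ y, 0 ≤ NW y) (T : V → W) : 0 ≤ ratioSup NV NW T :=
  Real.iSup_nonneg fun _ => div_nonneg (hW _) (hV _)

lemma Finset.half_card_le_card_filter_abs_le {ι : Type*} (A : Finset ι) (g : ι → ℝ) {t : ℝ}
    (ht : 0 ≤ t) (h : 2 * ∑ j ∈ A, g j ^ 2 ≤ #A * t ^ 2) :
    (#A : ℝ) / 2 ≤ #(A.filter fun j => |g j| ≤ t) := by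
  set B := A.filter fun j => ¬|g j| ≤ t
  have hcard : (#(A.filter fun j => |g j| ≤ t) : ℝ) + #B = #A := by
    exact_mod_cast card_filter_add_card_filter_not _
  suffices (#B : ℝ) ≤ #A / 2 by linarith
  rcases B.eq_empty_or_nonempty with hB | hB
  · rw [hB, card_empty, Nat.cast_zero]; positivity
  have hlt : #B * t ^ 2 < ∑ j ∈ B, g j ^ 2 := by
    have := sum_lt_sum_of_nonempty (f := fun _ => t ^ 2) (g := fun j => g j ^ 2) hB
      fun j hj => by
        rw [← sq_abs (g j)]
        exact pow_lt_pow_left₀ (not_le.1 (mem_filter.1 hj).2) ht two_ne_zero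
    rwa [sum_const, nsmul_eq_mul] at this
  have hBA : ∑ j ∈ B, g j ^ 2 ≤ ∑ j ∈ A, g j ^ 2 :=
    sum_le_sum_of_subset_of_nonneg (filter_subset _ A) fun j _ _ => sq_nonneg (g j)
  exact (lt_of_mul_lt_mul_right (b := (#B : ℝ)) (c := #A / 2) (by linarith) (sq_nonneg t)).le

namespace KaltonPeck

variable {n : ℕ}

lemma l2_eq_norm (b : Fin n → ℝ) : l2 b = ‖WithLp.toLp 2 b‖ := by
  simp [l2, EuclideanSpace.norm_eq]

lemma l2_nonneg (b : Fin n → ℝ) : 0 ≤ l2 b := Real.sqrt_nonneg _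

lemma l2_sq (b : Fin n → ℝ) : l2 b ^ 2 = ∑ j, b j ^ 2 :=
  Real.sq_sqrt (sum_nonneg fun j _ => sq_nonneg (b j))

lemma l2_add_le (a b : Fin n → ℝ) : l2 (a + b) ≤ l2 a + l2 b := by
  simpa only [l2_eq_norm, WithLp.toLp_add] using norm_add_le _ _

lemma l2_sub_le (a b : Fin n → ℝ) : l2 (a - b) ≤ l2 a + l2 b := by
  simpa only [l2_eq_norm, WithLp.toLp_sub] using norm_sub_le _ _

lemma l2_smul (c : ℝ) (b : Fin n → ℝ) : l2 (c • b) = |c| * l2 b := by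
  rw [l2_eq_norm, l2_eq_norm, WithLp.toLp_smul, norm_smul, Real.norm_eq_abs]

lemma eq_zero_of_l2_eq_zero {b : Fin n → ℝ} (h : l2 b = 0) : b = 0 := by
  rw [l2_eq_norm, norm_eq_zero] at h
  simpa using congrArg WithLp.ofLp h

lemma abs_le_l2 (b : Fin n → ℝ) (i : Fin n) : |b i| ≤ l2 b := by
  rw [← Real.sqrt_sq_eq_abs]
  exact Real.sqrt_le_sqrt (single_le_sum (fun j _ => sq_nonneg (b j)) (mem_univ i))

lemma norm_le_l2 (b : Fin n → ℝ) : ‖b‖ ≤ l2 b :=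
  (pi_norm_le_iff_of_nonneg (l2_nonneg b)).2 fun i =>
    (Real.norm_eq_abs _).trans_le (abs_le_l2 b i)

lemma l2_mul_le {u : Fin n → ℝ} {c : ℝ} (hu : ∀ i, |u i| ≤ c) (b : Fin n → ℝ) :
    l2 (u * b) ≤ c * l2 b := by
  rcases isEmpty_or_nonempty (Fin n) with _ | ⟨⟨i⟩⟩
  · simp [l2]
  have hc : 0 ≤ c := (abs_nonneg _).trans (hu i)
  refine (pow_le_pow_iff_left₀ (l2_nonneg _) (mul_nonneg hc (l2_nonneg _)) two_ne_zero).1 ?_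
  rw [mul_pow, l2_sq, l2_sq, mul_sum]
  refine sum_le_sum fun j _ => ?_
  rw [Pi.mul_apply, mul_pow, ← sq_abs (u j)]
  gcongr
  exact hu j

lemma l2_one : l2 (1 : Fin n → ℝ) = √n := by
  simp [l2]

lemma l2_le_sqrt_mul_norm (b : Fin n → ℝ) : l2 b ≤ √n * ‖b‖ := by
  simpa [mul_comm, l2_one] using l2_mul_le (fun i => (Real.norm_eq_abs (b i)).symm.trans_le
    (norm_le_pi_norm b i)) 1

lemma l2_single (j : Fin n) (c : ℝ) : l2 (Pi.single j c) = |c| := by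
  simp [l2, Pi.single_apply, Real.sqrt_sq_eq_abs]

lemma l2_indicator_one (A : Finset (Fin n)) : l2 ((A : Set (Fin n)).indicator 1) = √(#A : ℝ) := by
  simp [l2, Set.indicator_apply]

lemma l2_mul_indicator_one_sq (u : Fin n → ℝ) (A : Finset (Fin n)) :
    l2 (u * (A : Set (Fin n)).indicator 1) ^ 2 = ∑ j ∈ A, u j ^ 2 := by
  simp [l2_sq, Set.indicator_apply]

lemma abs_KPF_le (b : Fin n → ℝ) (i : Fin n) : |KPF b i| ≤ l2 b := by
  unfold KPF
  split_ifs with hb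
  · simpa using l2_nonneg b
  have hbi : 0 < |b i| := abs_pos.2 hb
  have hl : 0 < l2 b := hbi.trans_le (abs_le_l2 b i)
  have key := Real.abs_log_mul_self_lt _ (div_pos hbi hl) ((div_le_one hl).2 (abs_le_l2 b i))
  calc |b i * Real.log (|b i| / l2 b)| = l2 b * |Real.log (|b i| / l2 b) * (|b i| / l2 b)| := by
        rw [abs_mul, abs_mul, abs_div, abs_abs, abs_of_pos hl]; field_simp
    _ ≤ l2 b := mul_le_of_le_one_right hl.le key.le

lemma l2_KPF_le (b : Fin n → ℝ) : l2 (KPF b) ≤ √n * l2 b := by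
  simpa [mul_comm, l2_one] using l2_mul_le (abs_KPF_le b) 1

lemma KPF_zero : KPF (0 : Fin n → ℝ) = 0 := by
  ext i; simp [KPF]

lemma KPF_single (j : Fin n) (c : ℝ) : KPF (Pi.single j c) = 0 := by
  ext i
  rcases eq_or_ne i j with rfl | hij
  · rcases eq_or_ne c 0 with rfl | hc <;> simp [KPF, l2_single, *]
  · simp [KPF, hij]

lemma KPF_indicator_one (A : Finset (Fin n)) :
    KPF ((A : Set (Fin n)).indicator 1) =
      (-Real.log √(#A : ℝ)) • (A : Set (Fin n)).indicator 1 := by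
  ext i
  by_cases hi : i ∈ A <;> simp [KPF, l2_indicator_one, hi]

lemma znorm_nonneg (x : (Fin n → ℝ) × (Fin n → ℝ)) : 0 ≤ znorm x :=
  add_nonneg (l2_nonneg _) (l2_nonneg _)

lemma l2_snd_le_znorm (x : (Fin n → ℝ) × (Fin n → ℝ)) : l2 x.2 ≤ znorm x :=
  le_add_of_nonneg_right (l2_nonneg _)

lemma znorm_pos {x : (Fin n → ℝ) × (Fin n → ℝ)} (hx : x ≠ 0) : 0 < znorm x := by
  refine (znorm_nonneg x).lt_of_ne fun h => hx ?_
  obtain ⟨h2, h1⟩ := (add_eq_zero_iff_of_nonneg (l2_nonneg _) (l2_nonneg _)).1 h.symm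
  replace h2 := eq_zero_of_l2_eq_zero h2
  replace h1 := eq_zero_of_l2_eq_zero h1
  rw [h2, KPF_zero, sub_zero] at h1
  exact Prod.ext h1 h2

lemma znorm_single (j : Fin n) (a c : ℝ) :
    znorm (Pi.single j a, Pi.single j c) = |c| + |a| := by
  simp [znorm, KPF_single, l2_single]

lemma znorm_le_mul_norm (x : (Fin n → ℝ) × (Fin n → ℝ)) :
    znorm x ≤ (2 + √n) * √n * ‖x‖ := by
  have h1 : l2 x.1 ≤ √n * ‖x‖ :=
    (l2_le_sqrt_mul_norm x.1).trans (by gcongr; exact norm_fst_le x)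
  have h2 : l2 x.2 ≤ √n * ‖x‖ :=
    (l2_le_sqrt_mul_norm x.2).trans (by gcongr; exact norm_snd_le x)
  calc znorm x ≤ l2 x.2 + (l2 x.1 + √n * l2 x.2) :=
        add_le_add_right ((l2_sub_le _ _).trans (add_le_add_right (l2_KPF_le x.2) _)) _
    _ ≤ √n * ‖x‖ + (√n * ‖x‖ + √n * (√n * ‖x‖)) := by gcongr
    _ = (2 + √n) * √n * ‖x‖ := by ring

lemma norm_le_mul_znorm (x : (Fin n → ℝ) × (Fin n → ℝ)) :
    ‖x‖ ≤ (2 + √n) * znorm x := by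
  have h1 : l2 x.1 ≤ znorm x + √n * znorm x :=
    calc l2 x.1 = l2 (x.1 - KPF x.2 + KPF x.2) := by rw [sub_add_cancel]
      _ ≤ l2 (x.1 - KPF x.2) + √n * l2 x.2 :=
          (l2_add_le _ _).trans (add_le_add_right (l2_KPF_le _) _)
      _ ≤ znorm x + √n * znorm x := by
          gcongr
          exacts [le_add_of_nonneg_left (l2_nonneg _), l2_snd_le_znorm x]
  calc ‖x‖ ≤ ‖x.1‖ + ‖x.2‖ := max_le (le_add_of_nonneg_right (norm_nonneg _))
        (le_add_of_nonneg_left (norm_nonneg _))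
    _ ≤ l2 x.1 + l2 x.2 := add_le_add (norm_le_l2 _) (norm_le_l2 _)
    _ ≤ (2 + √n) * znorm x := by linarith [l2_snd_le_znorm x]

/-- `ratioSup` is a real `⨆`, which is `0` for an unbounded family, so the ratios must first be
bounded: compare `znorm` with the sup norm, for which linear maps in finite dimension are
bounded. -/
lemma znorm_map_le (T : ((Fin n → ℝ) × (Fin n → ℝ)) →ₗ[ℝ] ((Fin n → ℝ) × (Fin n → ℝ)))
    (x : (Fin n → ℝ) × (Fin n → ℝ)) :
    znorm (T x) ≤ ratioSup znorm znorm (fun x => T x) * znorm x := by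
  rcases eq_or_ne x 0 with rfl | hx
  · simp [znorm, KPF_zero, l2]
  set K := ‖LinearMap.toContinuousLinearMap T‖
  refine le_ratioSup_mul (M := (2 + √n) * √n * K * (2 + √n)) (fun y => ?_)
    (fun _ => znorm_pos) hx
  calc znorm (T y) ≤ (2 + √n) * √n * ‖T y‖ := znorm_le_mul_norm _
    _ ≤ (2 + √n) * √n * (K * ‖y‖) := by
        gcongr; exact (LinearMap.toContinuousLinearMap T).le_opNorm y
    _ ≤ (2 + √n) * √n * (K * ((2 + √n) * znorm y)) := by gcongr; exact norm_le_mul_znorm y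
    _ = _ := by ring

def SplitsWith (T : ((Fin n → ℝ) × (Fin n → ℝ)) →ₗ[ℝ] ((Fin n → ℝ) × (Fin n → ℝ)))
    (α β γ δ : Fin n → ℝ) : Prop :=
  ∀ j : Fin n,
    T (Pi.single j 1, 0) = (Pi.single j (α j), Pi.single j (γ j)) ∧
    T (0, Pi.single j 1) = (Pi.single j (β j), Pi.single j (δ j))

variable {T : ((Fin n → ℝ) × (Fin n → ℝ)) →ₗ[ℝ] ((Fin n → ℝ) × (Fin n → ℝ))}
  {α β γ δ : Fin n → ℝ}

lemma SplitsWith.apply (hT : SplitsWith T α β γ δ) (x : (Fin n → ℝ) × (Fin n → ℝ)) :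
    T x = (α * x.1 + β * x.2, γ * x.1 + δ * x.2) := by
  have hx : x = ∑ j, (x.1 j • ((Pi.single j 1 : Fin n → ℝ), (0 : Fin n → ℝ)) +
      x.2 j • ((0 : Fin n → ℝ), (Pi.single j 1 : Fin n → ℝ))) := by
    ext i <;> simp [Prod.fst_sum, Prod.snd_sum, Finset.sum_apply, Pi.single_apply]
  conv_lhs => rw [hx]
  simp only [map_sum, map_add, map_smul, (hT _).1, (hT _).2]
  ext i <;> simp [Prod.fst_sum, Prod.snd_sum, Finset.sum_apply, Pi.single_apply, mul_comm,
    sum_add_distrib]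

lemma SplitsWith.abs_delta_le_ratioSup (hT : SplitsWith T α β γ δ) (j : Fin n) :
    |δ j| ≤ ratioSup znorm znorm (fun x => T x) := by
  have h := znorm_map_le T (0, Pi.single j 1)
  have h1 : znorm ((0 : Fin n → ℝ), Pi.single j (1 : ℝ)) = 1 := by simpa using znorm_single j 0 1
  rw [(hT j).2, znorm_single, h1, mul_one] at h
  linarith [abs_nonneg (β j)]

lemma SplitsWith.log_card_mul_l2_le (hT : SplitsWith T α β γ δ) (A : Finset (Fin n)) :
    Real.log #A * l2 (γ * (A : Set (Fin n)).indicator 1) ≤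
      4 * ratioSup znorm znorm (fun x => T x) * √(#A : ℝ) := by
  set C := ratioSup znorm znorm (fun x => T x)
  set b := (A : Set (Fin n)).indicator (1 : Fin n → ℝ)
  set L := Real.log √(#A : ℝ)
  have hL : L = Real.log #A / 2 := Real.log_sqrt (Nat.cast_nonneg _)
  have hL0 : 0 ≤ L := hL ▸ div_nonneg (Real.log_natCast_nonneg _) zero_le_two
  have hx : znorm (-L • b, b) = √(#A : ℝ) := by
    have hF : KPF b = -L • b := KPF_indicator_one A
    rw [znorm, hF, sub_self, l2_indicator_one]
    simp [l2]
  have hTx : l2 (γ * (-L • b) + δ * b) ≤ C * √(#A : ℝ) :=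
    calc l2 (γ * (-L • b) + δ * b) = l2 (T (-L • b, b)).2 := by rw [hT.apply]
      _ ≤ C * znorm (-L • b, b) := (l2_snd_le_znorm _).trans (znorm_map_le T _)
      _ = C * √(#A : ℝ) := by rw [hx]
  have hδb : l2 (δ * b) ≤ C * √(#A : ℝ) := l2_indicator_one A ▸ l2_mul_le hT.abs_delta_le_ratioSup b
  have hγb : L • (γ * b) = δ * b - (γ * (-L • b) + δ * b) := by
    ext; simp only [Pi.smul_apply, Pi.mul_apply, Pi.sub_apply, Pi.add_apply, smul_eq_mul]; ring
  calc Real.log #A * l2 (γ * b) = 2 * l2 (L • (γ * b)) := by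
        rw [l2_smul, abs_of_nonneg hL0, hL]; ring
    _ ≤ 2 * (C * √(#A : ℝ) + C * √(#A : ℝ)) := by
        rw [hγb]; gcongr; exact (l2_sub_le _ _).trans (add_le_add hδb hTx)
    _ = 4 * C * √(#A : ℝ) := by ring

lemma SplitsWith.two_mul_sum_sq_le (hT : SplitsWith T α β γ δ) {A : Finset (Fin n)}
    (hA : 2 ≤ #A) : 2 * ∑ j ∈ A, γ j ^ 2 ≤
      #A * (4 * √2 * ratioSup znorm znorm (fun x => T x) / Real.log #A) ^ 2 := by
  have hlog : 0 < Real.log #A := Real.log_pos (by exact_mod_cast hA)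
  have h := (le_div_iff₀' hlog).2 (hT.log_card_mul_l2_le A)
  calc 2 * ∑ j ∈ A, γ j ^ 2 = 2 * l2 (γ * (A : Set (Fin n)).indicator 1) ^ 2 := by
        rw [l2_mul_indicator_one_sq]
    _ ≤ 2 * (4 * ratioSup znorm znorm (fun x => T x) * √(#A : ℝ) / Real.log #A) ^ 2 := by
        gcongr; exact l2_nonneg _
    _ = _ := by
        rw [div_pow, div_pow, mul_pow, mul_pow, mul_pow, mul_pow, Real.sq_sqrt (Nat.cast_nonneg _),
          Real.sq_sqrt zero_le_two]
        ring

end KaltonPeck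

open KaltonPeck

theorem split_gamma_subset_bound_general (n : ℕ)
    (T : ((Fin n → ℝ) × (Fin n → ℝ)) →ₗ[ℝ] ((Fin n → ℝ) × (Fin n → ℝ)))
    (α β γ δ : Fin n → ℝ)
    (hT : ∀ j : Fin n,
      T (Pi.single j 1, 0) = (Pi.single j (α j), Pi.single j (γ j)) ∧
      T (0, Pi.single j 1) = (Pi.single j (β j), Pi.single j (δ j))) :
    ∀ A : Finset (Fin n), 2 ≤ A.card →
      ∃ A' ⊆ A, (A.card : ℝ) / 2 ≤ (A'.card : ℝ) ∧
        ∀ j ∈ A', |γ j| ≤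
          4 * Real.sqrt 2 * ratioSup znorm znorm (fun x => T x) / Real.log (A.card : ℝ) := by
  intro A hA
  have hC : 0 ≤ ratioSup znorm znorm (fun x => T x) := ratioSup_nonneg znorm_nonneg znorm_nonneg _
  have ht : 0 ≤ 4 * Real.sqrt 2 * ratioSup znorm znorm (fun x => T x) / Real.log (A.card : ℝ) :=
    div_nonneg (by positivity) (Real.log_natCast_nonneg _)
  exact ⟨_, filter_subset _ A, A.half_card_le_card_filter_abs_le γ ht
    ((show SplitsWith T α β γ δ from hT).two_mul_sum_sq_le hA), fun j hj => (mem_filter.1 hj).2⟩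

/-- For a splitting operator `T` on `Z_2^n` and any `A ⊆ {1,…,n}` with `|A| = k ≥ 2`,
there is `A' ⊆ A` with `|A'| ≥ k/2` on which `|γ_j| ≤ 4√2·‖T‖/log k`. -/
theorem split_gamma_subset_bound (n : ℕ) (hn : 1 ≤ n)
    (T : ((Fin n → ℝ) × (Fin n → ℝ)) →ₗ[ℝ] ((Fin n → ℝ) × (Fin n → ℝ)))
    (α β γ δ : Fin n → ℝ)
    (hT : ∀ j : Fin n,
      T (Pi.single j 1, 0) = (Pi.single j (α j), Pi.single j (γ j)) ∧
      T (0, Pi.single j 1) = (Pi.single j (β j), Pi.single j (δ j))) :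
    ∀ A : Finset (Fin n), 2 ≤ A.card →
      ∃ A' ⊆ A, (A.card : ℝ) / 2 ≤ (A'.card : ℝ) ∧
        ∀ j ∈ A', |γ j| ≤
          4 * Real.sqrt 2 * ratioSup znorm znorm (fun x => T x) / Real.log (A.card : ℝ) :=
  split_gamma_subset_bound_general n T α β γ δ hT
end

section
/- There exists a constant C > 0 such that the following holds for every n ≥ 1, every linear map T : ℝⁿ×ℝⁿ → ℝⁿ×ℝⁿ that splits (with block matrices (α_j, β_j; γ_j, δ_j)), and every k ≥ 2. If A' ⊆ {1,…,n} satisfies |A'| ≤ k and max_{j∈A'} |γ_j| ≤ 4√2·‖T‖/log k, then for all a, b ∈ ℝⁿ with a ≠ 0 and {j : a_j ≠ 0} ⊆ A', one has (∑_{j=1}^n (δ_j a_j − α_j a_j + γ_j a_j·log(|a_j|/‖a‖₂))²)^{1/2} ≤ C·‖T‖·‖(a,b)‖_{Z_2^n}, where the j-th summand is interpreted as 0 when a_j = 0. -/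
open scoped BigOperators

namespace KP
variable {n : ℕ}
variable {n : ℕ}

lemma l2_nonneg (v : Fin n → ℝ) : 0 ≤ l2 v := Real.sqrt_nonneg _

lemma l2_eq_norm (v : Fin n → ℝ) : l2 v = ‖(WithLp.equiv 2 (Fin n → ℝ)).symm v‖ := by
  rw [EuclideanSpace.norm_eq]
  simp [l2, Real.norm_eq_abs, sq_abs]

lemma l2_zero : l2 (0 : Fin n → ℝ) = 0 := by simp [l2]

lemma l2_add_le (u v : Fin n → ℝ) : l2 (u + v) ≤ l2 u + l2 v := by
  rw [l2_eq_norm, l2_eq_norm, l2_eq_norm]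
  rw [show (WithLp.equiv 2 (Fin n → ℝ)).symm (u + v)
      = (WithLp.equiv 2 (Fin n → ℝ)).symm u + (WithLp.equiv 2 (Fin n → ℝ)).symm v from rfl]
  exact norm_add_le _ _

lemma l2_smul (c : ℝ) (v : Fin n → ℝ) : l2 (c • v) = |c| * l2 v := by
  rw [l2_eq_norm, l2_eq_norm]
  rw [show (WithLp.equiv 2 (Fin n → ℝ)).symm (c • v)
      = c • (WithLp.equiv 2 (Fin n → ℝ)).symm v from rfl]
  rw [norm_smul]; simp [Real.norm_eq_abs]

lemma l2_mono {u v : Fin n → ℝ} (h : ∀ j, |u j| ≤ |v j|) : l2 u ≤ l2 v := by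
  apply Real.sqrt_le_sqrt
  apply Finset.sum_le_sum
  intro j _
  have := h j
  calc u j ^ 2 = |u j| ^ 2 := (sq_abs _).symm
    _ ≤ |v j| ^ 2 := by nlinarith [abs_nonneg (u j), abs_nonneg (v j)]
    _ = v j ^ 2 := sq_abs _

lemma abs_le_l2 (v : Fin n → ℝ) (j : Fin n) : |v j| ≤ l2 v := by
  rw [← Real.sqrt_sq (abs_nonneg (v j))]
  apply Real.sqrt_le_sqrt
  rw [sq_abs]
  exact Finset.single_le_sum (f := fun i => v i ^ 2) (fun i _ => sq_nonneg _) (Finset.mem_univ j)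

lemma l2_eq_zero {v : Fin n → ℝ} (h : l2 v = 0) : v = 0 := by
  funext j
  have h1 : |v j| ≤ 0 := h ▸ abs_le_l2 v j
  exact abs_eq_zero.mp ((abs_nonneg (v j)).antisymm h1).symm

lemma l2_pos {v : Fin n → ℝ} (h : v ≠ 0) : 0 < l2 v := by
  rcases lt_or_eq_of_le (l2_nonneg v) with h1 | h1
  · exact h1
  · exact absurd (l2_eq_zero h1.symm) h

lemma l2_neg (v : Fin n → ℝ) : l2 (-v) = l2 v := by simp [l2]

lemma l2_abs (v : Fin n → ℝ) : l2 (fun j => |v j|) = l2 v := by simp [l2, sq_abs]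

lemma l2_single (j : Fin n) (c : ℝ) : l2 (Pi.single j c) = |c| := by
  rw [l2]
  rw [Finset.sum_eq_single j]
  · simp [Real.sqrt_sq_eq_abs]
  · intro i _ hij; simp [Pi.single_apply, hij]
  · intro h; exact absurd (Finset.mem_univ j) h

lemma l2_mul_le (p q : Fin n → ℝ) : l2 (fun j => p j * q j) ≤ l2 p * l2 q := by
  rw [l2, l2, l2, ← Real.sqrt_mul (by positivity)]
  apply Real.sqrt_le_sqrt
  calc ∑ j, (p j * q j) ^ 2 = ∑ j, p j ^ 2 * q j ^ 2 := by simp [mul_pow]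
    _ ≤ ∑ j, p j ^ 2 * (∑ i, q i ^ 2) := by
        apply Finset.sum_le_sum; intro j _
        exact mul_le_mul_of_nonneg_left
          (Finset.single_le_sum (f := fun i => q i ^ 2) (fun i _ => sq_nonneg _)
            (Finset.mem_univ j)) (sq_nonneg _)
    _ = (∑ j, p j ^ 2) * ∑ i, q i ^ 2 := by rw [← Finset.sum_mul]

-- scalar lemmas
lemma mul_abs_log_le {t : ℝ} (h0 : 0 ≤ t) (h1 : t ≤ 1) : t * |Real.log t| ≤ 1 := by
  rcases eq_or_lt_of_le h0 with h | h
  · simp [← h]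
  · have hlog : Real.log t ≤ 0 := Real.log_nonpos (le_of_lt h) h1
    rw [abs_of_nonpos hlog]
    set L := -Real.log t with hL
    have hLnn : 0 ≤ L := by simp [hL]; linarith
    have ht : t = Real.exp (-L) := by
      rw [hL, neg_neg, Real.exp_log h]
    rw [ht]
    have h2 : L ≤ Real.exp L := by
      have := Real.add_one_le_exp L; linarith
    rw [Real.exp_neg]
    rw [inv_mul_eq_div, div_le_one (Real.exp_pos L)]
    exact h2

lemma mul_sq_log_le {t : ℝ} (h0 : 0 < t) (h1 : t ≤ 1) : t * (Real.log t) ^ 2 ≤ 16 := by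
  have hlog : Real.log t ≤ 0 := Real.log_nonpos (le_of_lt h0) h1
  set L := -Real.log t with hL
  have hLnn : 0 ≤ L := by linarith
  have ht : t = Real.exp (-L) := by rw [hL, neg_neg, Real.exp_log h0]
  have h2 : L / 2 ≤ Real.exp (L / 2) := by
    have := Real.add_one_le_exp (L / 2); linarith
  have h3 : L ^ 2 / 16 ≤ Real.exp L := by
    have h4 : Real.exp L = Real.exp (L/2) * Real.exp (L/2) := by
      rw [← Real.exp_add]; ring_nf
    have h5 : (L/2) * (L/2) ≤ Real.exp (L/2) * Real.exp (L/2) := by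
      apply mul_le_mul h2 h2 (by linarith) (le_of_lt (Real.exp_pos _))
    nlinarith
  have hsq : (Real.log t) ^ 2 = L ^ 2 := by rw [hL]; ring
  rw [hsq, ht, Real.exp_neg, inv_mul_eq_div, div_le_iff₀ (Real.exp_pos L)]
  nlinarith [Real.exp_pos L]

lemma mul_abs_log_div_le {x y : ℝ} (hx : 0 < x) (hxy : x ≤ y) : x * |Real.log (x / y)| ≤ y := by
  have hy : 0 < y := lt_of_lt_of_le hx hxy
  have ht0 : 0 < x / y := div_pos hx hy
  have ht1 : x / y ≤ 1 := (div_le_one hy).mpr hxy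
  have h5 := mul_abs_log_le (le_of_lt ht0) ht1
  have h6 : y * ((x/y) * |Real.log (x/y)|) = x * |Real.log (x/y)| := by
    field_simp
  calc x * |Real.log (x / y)| = y * ((x/y) * |Real.log (x/y)|) := h6.symm
    _ ≤ y * 1 := mul_le_mul_of_nonneg_left h5 (le_of_lt hy)
    _ = y := mul_one y

-- the coordinatewise function g(t) = t log |t|
noncomputable def gfun (t : ℝ) : ℝ := t * Real.log |t|

lemma gfun_zero : gfun 0 = 0 := by simp [gfun]

lemma abs_gfun_le {t : ℝ} (h : |t| ≤ 1) : |gfun t| ≤ 1 := by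
  unfold gfun
  rw [abs_mul]
  exact mul_abs_log_le (abs_nonneg t) h

lemma gfun_scale {r : ℝ} (hr : 0 < r) (z : ℝ) :
    gfun z = r * gfun (z / r) + z * Real.log r := by
  rcases eq_or_ne z 0 with h | h
  · simp [h, gfun]
  · have hzr : z / r ≠ 0 := div_ne_zero h (ne_of_gt hr)
    rw [gfun, gfun, abs_div, abs_of_pos hr,
      Real.log_div (abs_ne_zero.mpr h) (ne_of_gt hr)]
    field_simp
    ring

lemma gfun_quasi (p q : ℝ) : |gfun (p + q) - gfun p - gfun q| ≤ 3 * (|p| + |q|) := by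
  rcases eq_or_ne p 0 with hp | hp
  · simp [hp, gfun_zero]
    try positivity
  rcases eq_or_ne q 0 with hq | hq
  · simp [hq, gfun_zero]
    try positivity
  set r := |p| + |q| with hr
  have hrpos : 0 < r := by positivity
  have key : gfun (p + q) - gfun p - gfun q
      = r * (gfun ((p+q)/r) - gfun (p/r) - gfun (q/r)) := by
    rw [gfun_scale hrpos (p+q), gfun_scale hrpos p, gfun_scale hrpos q]
    ring
  rw [key, abs_mul, abs_of_pos hrpos]
  have h1 : |gfun ((p+q)/r)| ≤ 1 := by
    apply abs_gfun_le
    rw [abs_div, abs_of_pos hrpos, div_le_one hrpos]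
    exact le_trans (abs_add_le p q) (le_of_eq rfl)
  have h2 : |gfun (p/r)| ≤ 1 := by
    apply abs_gfun_le
    rw [abs_div, abs_of_pos hrpos, div_le_one hrpos]
    linarith [abs_nonneg q]
  have h3 : |gfun (q/r)| ≤ 1 := by
    apply abs_gfun_le
    rw [abs_div, abs_of_pos hrpos, div_le_one hrpos]
    linarith [abs_nonneg p]
  calc r * |gfun ((p+q)/r) - gfun (p/r) - gfun (q/r)|
      ≤ r * (|gfun ((p+q)/r)| + |gfun (p/r)| + |gfun (q/r)|) := by
        apply mul_le_mul_of_nonneg_left _ (le_of_lt hrpos)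
        calc |gfun ((p+q)/r) - gfun (p/r) - gfun (q/r)|
            ≤ |gfun ((p+q)/r) - gfun (p/r)| + |gfun (q/r)| := abs_sub _ _
          _ ≤ |gfun ((p+q)/r)| + |gfun (p/r)| + |gfun (q/r)| := by
              linarith [abs_sub (gfun ((p+q)/r)) (gfun (p/r))]
    _ ≤ r * 3 := by apply mul_le_mul_of_nonneg_left (by linarith) (le_of_lt hrpos)
    _ = 3 * r := by ring
variable {n : ℕ}
open KP
-- KPF basics
lemma KPF_zero : KPF (0 : Fin n → ℝ) = 0 := by
  funext j; simp [KPF]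

lemma KPF_apply_ne {v : Fin n → ℝ} {j : Fin n} (h : v j ≠ 0) :
    KPF v j = v j * Real.log (|v j| / l2 v) := by simp [KPF, h]

lemma abs_KPF_le (v : Fin n → ℝ) (j : Fin n) : |KPF v j| ≤ l2 v := by
  by_cases h : v j = 0
  · simp [KPF, h, l2_nonneg]
  · rw [KPF_apply_ne h]
    have hvj : 0 < |v j| := abs_pos.mpr h
    have hN : 0 < l2 v := lt_of_lt_of_le hvj (abs_le_l2 v j)
    have hle : |v j| ≤ l2 v := abs_le_l2 v j
    rw [abs_mul]
    calc |v j| * |Real.log (|v j| / l2 v)| ≤ l2 v := mul_abs_log_div_le hvj hle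
    
lemma KPF_single (j : Fin n) (c : ℝ) : KPF (Pi.single j c) = 0 := by
  classical
  funext i
  by_cases h : (Pi.single j c : Fin n → ℝ) i = 0
  · simp [KPF, h]
  · have hij : i = j := by
      by_contra hij
      apply h
      simp [Pi.single_apply, hij]
    subst hij
    rw [KPF_apply_ne h, l2_single]
    rw [Pi.single_eq_same] at h ⊢
    rw [div_self (abs_ne_zero.mpr h)]
    simp

lemma KPF_neg (v : Fin n → ℝ) : KPF (-v) = -(KPF v) := by
  funext j
  by_cases h : v j = 0
  · simp [KPF, h]
  · have h' : (-v) j ≠ 0 := by simpa using h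
    rw [KPF_apply_ne h']
    simp only [Pi.neg_apply, l2_neg, abs_neg]
    rw [KPF_apply_ne h]
    ring

lemma KPF_smul_pos {t : ℝ} (ht : 0 < t) (v : Fin n → ℝ) : KPF (t • v) = t • KPF v := by
  funext j
  by_cases h : v j = 0
  · simp [KPF, h, ht.ne']
  · have h' : (t • v) j ≠ 0 := by simp [h, ht.ne']
    have hN : 0 < l2 v := lt_of_lt_of_le (abs_pos.mpr h) (abs_le_l2 v j)
    rw [Pi.smul_apply, smul_eq_mul]
    rw [KPF_apply_ne h', KPF_apply_ne h]
    rw [Pi.smul_apply, smul_eq_mul, l2_smul, abs_mul, abs_of_pos ht]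
    rw [mul_div_mul_left _ _ (ne_of_gt ht)]
    ring

lemma KPF_decomp {v : Fin n → ℝ} (hv : v ≠ 0) (j : Fin n) :
    KPF v j = gfun (v j) - v j * Real.log (l2 v) := by
  have hN : 0 < l2 v := l2_pos hv
  by_cases h : v j = 0
  · simp [KPF, h, gfun_zero]
  · rw [KPF_apply_ne h, gfun,
      Real.log_div (abs_ne_zero.mpr h) (ne_of_gt hN)]
    ring
lemma l2_sub_le (u v : Fin n → ℝ) : l2 (u - v) ≤ l2 u + l2 v := by
  have h : u - v = u + (-v) := by funext j; simp; ring
  rw [h]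
  calc l2 (u + (-v)) ≤ l2 u + l2 (-v) := l2_add_le u (-v)
    _ = l2 u + l2 v := by rw [l2_neg]

lemma KPF_quasi_norm {x y : Fin n → ℝ} (hx : x ≠ 0) (hy : y ≠ 0) (hs : x + y ≠ 0)
    (hnorm : l2 x + l2 y = 1) : l2 (KPF (x + y) - KPF x - KPF y) ≤ 6 := by
  set s := x + y with hsdef
  have hNx : 0 < l2 x := l2_pos hx
  have hNy : 0 < l2 y := l2_pos hy
  have hNs : 0 < l2 s := l2_pos hs
  have hNx1 : l2 x ≤ 1 := by linarith
  have hNy1 : l2 y ≤ 1 := by linarith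
  have hNs1 : l2 s ≤ 1 := by
    have := l2_add_le x y; linarith
  set G : Fin n → ℝ := fun j => gfun (s j) - gfun (x j) - gfun (y j) with hG
  set P : Fin n → ℝ := fun j =>
    x j * Real.log (l2 x) + y j * Real.log (l2 y) - s j * Real.log (l2 s) with hP
  have hdecomp : KPF s - KPF x - KPF y = G + P := by
    funext j
    simp only [Pi.sub_apply, Pi.add_apply, hG, hP]
    rw [KPF_decomp hs j, KPF_decomp hx j, KPF_decomp hy j]
    ring
  have hGle : l2 G ≤ 3 := by
    have h1 : l2 G ≤ l2 ((3:ℝ) • ((fun j => |x j|) + (fun j => |y j|))) := by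
      apply l2_mono
      intro j
      have h3 : (0:ℝ) ≤ 3 * (|x j| + |y j|) := by positivity
      show |gfun (s j) - gfun (x j) - gfun (y j)|
          ≤ |((3:ℝ) • ((fun j => |x j|) + (fun j => |y j|))) j|
      rw [show ((3:ℝ) • ((fun j => |x j|) + (fun j => |y j|))) j
          = 3 * (|x j| + |y j|) from rfl, abs_of_nonneg h3,
          show s j = x j + y j from rfl]
      exact gfun_quasi (x j) (y j)
    have h2 : l2 ((3:ℝ) • ((fun j => |x j|) + (fun j => |y j|)))
        = 3 * l2 ((fun j => |x j|) + (fun j => |y j|)) := by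
      rw [l2_smul]; norm_num
    have h3 : l2 ((fun j => |x j|) + (fun j => |y j|)) ≤ l2 x + l2 y := by
      calc l2 ((fun j => |x j|) + (fun j => |y j|))
          ≤ l2 (fun j => |x j|) + l2 (fun j => |y j|) := l2_add_le _ _
        _ = l2 x + l2 y := by rw [l2_abs, l2_abs]
    rw [hnorm] at h3
    linarith
  have hPle : l2 P ≤ 3 := by
    have hdP : P = (Real.log (l2 x)) • x + (Real.log (l2 y)) • y
        - (Real.log (l2 s)) • s := by
      funext j
      simp only [Pi.sub_apply, Pi.add_apply, Pi.smul_apply, smul_eq_mul, hP]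
      ring
    rw [hdP]
    have t1 : l2 ((Real.log (l2 x)) • x) ≤ 1 := by
      rw [l2_smul]
      calc |Real.log (l2 x)| * l2 x = l2 x * |Real.log (l2 x)| := mul_comm _ _
        _ ≤ 1 := mul_abs_log_le (le_of_lt hNx) hNx1
    have t2 : l2 ((Real.log (l2 y)) • y) ≤ 1 := by
      rw [l2_smul]
      calc |Real.log (l2 y)| * l2 y = l2 y * |Real.log (l2 y)| := mul_comm _ _
        _ ≤ 1 := mul_abs_log_le (le_of_lt hNy) hNy1
    have t3 : l2 ((Real.log (l2 s)) • s) ≤ 1 := by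
      rw [l2_smul]
      calc |Real.log (l2 s)| * l2 s = l2 s * |Real.log (l2 s)| := mul_comm _ _
        _ ≤ 1 := mul_abs_log_le (le_of_lt hNs) hNs1
    calc l2 ((Real.log (l2 x)) • x + (Real.log (l2 y)) • y - (Real.log (l2 s)) • s)
        ≤ l2 ((Real.log (l2 x)) • x + (Real.log (l2 y)) • y)
          + l2 ((Real.log (l2 s)) • s) := l2_sub_le _ _
      _ ≤ l2 ((Real.log (l2 x)) • x) + l2 ((Real.log (l2 y)) • y)
          + l2 ((Real.log (l2 s)) • s) := by
            have := l2_add_le ((Real.log (l2 x)) • x) ((Real.log (l2 y)) • y)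
            linarith
      _ ≤ 3 := by linarith
  rw [hdecomp]
  calc l2 (G + P) ≤ l2 G + l2 P := l2_add_le _ _
    _ ≤ 6 := by linarith

lemma KPF_quasi (x y : Fin n → ℝ) :
    l2 (KPF (x + y) - KPF x - KPF y) ≤ 6 * (l2 x + l2 y) := by
  by_cases hx : x = 0
  · subst hx
    have h : KPF ((0:Fin n → ℝ) + y) - KPF 0 - KPF y = 0 := by
      rw [zero_add, KPF_zero]; funext j; simp
    rw [h, l2_zero]
    have h1 := l2_nonneg (0 : Fin n → ℝ); have h2 := l2_nonneg y; nlinarith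
  by_cases hy : y = 0
  · subst hy
    have h : KPF (x + (0:Fin n → ℝ)) - KPF x - KPF 0 = 0 := by
      rw [add_zero, KPF_zero]; funext j; simp
    rw [h, l2_zero]
    have h1 := l2_nonneg (0 : Fin n → ℝ); have h2 := l2_nonneg x; nlinarith
  by_cases hs : x + y = 0
  · have hyx : y = -x := by
      funext j
      have : x j + y j = 0 := by
        have := congrFun hs j; simpa using this
      simp; linarith
    subst hyx
    have h : KPF (x + -x) - KPF x - KPF (-x) = 0 := by
      rw [KPF_neg]
      have hxx : x + -x = 0 := by funext j; simp
      rw [hxx, KPF_zero]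
      funext j; simp
    rw [h, l2_zero]
    have h1 := l2_nonneg (-x); have h2 := l2_nonneg x; nlinarith
  · set t := l2 x + l2 y with ht
    have htpos : 0 < t := by
      have := l2_pos hx; have := l2_nonneg y; rw [ht]; linarith
    have hti : 0 < t⁻¹ := inv_pos.mpr htpos
    set x' := t⁻¹ • x with hx'
    set y' := t⁻¹ • y with hy'
    have hx'0 : x' ≠ 0 := smul_ne_zero (ne_of_gt hti) hx
    have hy'0 : y' ≠ 0 := smul_ne_zero (ne_of_gt hti) hy
    have hsum : x' + y' = t⁻¹ • (x + y) := by rw [hx', hy', smul_add]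
    have hs'0 : x' + y' ≠ 0 := by
      rw [hsum]
      exact smul_ne_zero (ne_of_gt hti) hs
    have hnorm : l2 x' + l2 y' = 1 := by
      rw [hx', hy', l2_smul, l2_smul, abs_of_pos hti]
      rw [← mul_add, ← ht]
      field_simp
    have hmain := KPF_quasi_norm hx'0 hy'0 hs'0 hnorm
    have hscale : KPF (x' + y') - KPF x' - KPF y'
        = t⁻¹ • (KPF (x + y) - KPF x - KPF y) := by
      rw [hsum, hx', hy', KPF_smul_pos hti, KPF_smul_pos hti, KPF_smul_pos hti]
      funext j; simp only [Pi.sub_apply, Pi.smul_apply, smul_eq_mul]; ring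
    rw [hscale, l2_smul, abs_of_pos hti] at hmain
    calc l2 (KPF (x + y) - KPF x - KPF y)
        = t * (t⁻¹ * l2 (KPF (x + y) - KPF x - KPF y)) := by field_simp
      _ ≤ t * 6 := mul_le_mul_of_nonneg_left hmain (le_of_lt htpos)
      _ = 6 * t := by ring
lemma KPF_apply_zero {v : Fin n → ℝ} {j : Fin n} (h : v j = 0) : KPF v j = 0 := by
  simp [KPF, h]

/-- centralizer property -/
lemma KPF_central (lam v : Fin n → ℝ) (M : ℝ) (hM0 : 0 ≤ M) (hM : ∀ j, |lam j| ≤ M) :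
    l2 (fun j => lam j * KPF v j - KPF (fun i => lam i * v i) j) ≤ 2 * M * l2 v := by
  classical
  set vw : Fin n → ℝ := fun i => lam i * v i with hvw
  set m := l2 vw with hm
  set N := l2 v with hN
  have hNnn : 0 ≤ N := l2_nonneg v
  have hmlen : m ≤ M * N := by
    have h : l2 vw ≤ l2 (M • v) := by
      apply l2_mono
      intro j
      rw [show (M • v) j = M * v j from rfl, abs_mul, abs_mul, abs_of_nonneg hM0]
      exact mul_le_mul_of_nonneg_right (hM j) (abs_nonneg _)
    rw [l2_smul, abs_of_nonneg hM0] at h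
    exact h
  by_cases hm0 : m = 0
  · have hvw0 : vw = 0 := l2_eq_zero hm0
    have hzero : (fun j => lam j * KPF v j - KPF vw j) = 0 := by
      funext j
      have hj : lam j * v j = 0 := congrFun hvw0 j
      have h2 : KPF vw j = 0 := by
        rw [hvw0, KPF_zero]; rfl
      show lam j * KPF v j - KPF vw j = 0
      rcases mul_eq_zero.mp hj with h | h
      · rw [h2, h]; ring
      · rw [h2, KPF_apply_zero h]; ring
    rw [show (fun j => lam j * KPF v j - KPF (fun i => lam i * v i) j)
        = (fun j => lam j * KPF v j - KPF vw j) from rfl, hzero, l2_zero]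
    nlinarith [mul_nonneg hM0 hNnn]
  · have hmpos : 0 < m := lt_of_le_of_ne (l2_nonneg vw) (Ne.symm hm0)
    have hMNpos : 0 < M * N := lt_of_lt_of_le hmpos hmlen
    have hMpos : 0 < M := by
      rcases lt_or_eq_of_le hM0 with h | h
      · exact h
      · exfalso; rw [← h] at hMNpos; simp at hMNpos
    have hNpos : 0 < N := by nlinarith
    set T1 : Fin n → ℝ := (Real.log (m / (M * N))) • vw with hT1
    have hT1le : l2 T1 ≤ M * N := by
      rw [hT1, l2_smul, mul_comm]
      rw [← hm]
      exact mul_abs_log_div_le hmpos hmlen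
    have hT2le : l2 (fun j => (lam j * KPF v j - KPF vw j) - T1 j) ≤ M * N := by
      have hb : l2 (fun j => (lam j * KPF v j - KPF vw j) - T1 j) ≤ l2 (M • v) := by
        apply l2_mono
        intro j
        rw [show (M • v) j = M * v j from rfl]
        by_cases hj : lam j * v j = 0
        · have hDj : lam j * KPF v j - KPF vw j = 0 := by
            have h2 : KPF vw j = 0 := KPF_apply_zero hj
            rcases mul_eq_zero.mp hj with h | h
            · rw [h2, h]; ring
            · rw [h2, KPF_apply_zero h]; ring
          have hT1j : T1 j = 0 := by
            rw [hT1]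
            show Real.log (m / (M * N)) * vw j = 0
            rw [show vw j = lam j * v j from rfl, hj, mul_zero]
          rw [hDj, hT1j]
          simpa using abs_nonneg (M * v j)
        · have hlj : lam j ≠ 0 := fun h => hj (by rw [h, zero_mul])
          have hvj : v j ≠ 0 := fun h => hj (by rw [h, mul_zero])
          have habs : |lam j| > 0 := abs_pos.mpr hlj
          have hident : (lam j * KPF v j - KPF vw j) - T1 j
              = lam j * v j * (Real.log M - Real.log |lam j|) := by
            rw [hT1]
            show lam j * KPF v j - KPF vw j - Real.log (m / (M * N)) * vw j
              = lam j * v j * (Real.log M - Real.log |lam j|)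
            rw [KPF_apply_ne hvj, KPF_apply_ne (show vw j ≠ 0 from hj)]
            rw [show vw j = lam j * v j from rfl]
            rw [Real.log_div (ne_of_gt (abs_pos.mpr hvj)) (ne_of_gt hNpos),
                Real.log_div (ne_of_gt (abs_pos.mpr hj)) (ne_of_gt hmpos),
                Real.log_div (ne_of_gt hmpos) (ne_of_gt hMNpos),
                Real.log_mul (ne_of_gt hMpos) (ne_of_gt hNpos),
                abs_mul, Real.log_mul (ne_of_gt habs) (ne_of_gt (abs_pos.mpr hvj))]
            ring
          rw [hident]
          rw [abs_mul, abs_mul, abs_mul, abs_of_nonneg hM0]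
          rw [mul_comm |lam j| |v j|, mul_assoc, mul_comm M |v j|]
          apply mul_le_mul_of_nonneg_left _ (abs_nonneg (v j))
          have habslog : |lam j| * |Real.log M - Real.log (abs (lam j))|
              = |lam j| * |Real.log (abs (lam j) / M)| := by
            rw [Real.log_div (ne_of_gt habs) (ne_of_gt hMpos), abs_sub_comm]
          rw [habslog]
          exact mul_abs_log_div_le habs (hM j)
      rw [l2_smul, abs_of_nonneg hM0] at hb
      rw [hN]
      exact hb
    have hsplit : (fun j => lam j * KPF v j - KPF vw j)
        = T1 + (fun j => (lam j * KPF v j - KPF vw j) - T1 j) := by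
      funext j; simp
    calc l2 (fun j => lam j * KPF v j - KPF vw j)
        = l2 (T1 + (fun j => (lam j * KPF v j - KPF vw j) - T1 j)) := by rw [← hsplit]
      _ ≤ l2 T1 + l2 (fun j => (lam j * KPF v j - KPF vw j) - T1 j) := l2_add_le _ _
      _ ≤ M * N + M * N := add_le_add hT1le hT2le
      _ = 2 * M * N := by ring
def projF (A : Finset (Fin n)) (v : Fin n → ℝ) : Fin n → ℝ :=
  fun j => if j ∈ A then v j else 0

lemma projF_mem {A : Finset (Fin n)} {v : Fin n → ℝ} {j : Fin n} (h : j ∈ A) :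
    projF A v j = v j := if_pos h

lemma projF_not_mem {A : Finset (Fin n)} {v : Fin n → ℝ} {j : Fin n} (h : j ∉ A) :
    projF A v j = 0 := if_neg h

lemma abs_projF_le (A : Finset (Fin n)) (v : Fin n → ℝ) (j : Fin n) :
    |projF A v j| ≤ |v j| := by
  by_cases h : j ∈ A
  · rw [projF_mem h]
  · rw [projF_not_mem h]; simp

lemma l2_projF_le (A : Finset (Fin n)) (v : Fin n → ℝ) : l2 (projF A v) ≤ l2 v :=
  l2_mono (abs_projF_le A v)

lemma log_k_pos {k : ℕ} (hk : 2 ≤ k) : 0.6931 ≤ Real.log k := by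
  have h2 : Real.log 2 ≤ Real.log k := by
    apply Real.log_le_log (by norm_num)
    exact_mod_cast hk
  have := Real.log_two_gt_d9
  linarith

lemma l2_projF_KPF_le (A : Finset (Fin n)) (k : ℕ) (hk : 2 ≤ k) (hA : A.card ≤ k)
    (v : Fin n → ℝ) : l2 (projF A (KPF v)) ≤ 6 * Real.log k * l2 v := by
  have hlogk := log_k_pos hk
  have hkpos : (0:ℝ) < k := by positivity
  by_cases hv : v = 0
  · subst hv
    rw [KPF_zero]
    have : projF A (0 : Fin n → ℝ) = 0 := by
      funext j; by_cases h : j ∈ A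
      · rw [projF_mem h]
      · rw [projF_not_mem h]; rfl
    rw [this, l2_zero]
    have := l2_nonneg (0 : Fin n → ℝ)
    nlinarith
  · set N := l2 v with hN
    have hNpos : 0 < N := l2_pos hv
    have hNsq : N ^ 2 = ∑ j, v j ^ 2 := by
      rw [hN, l2, sq, Real.mul_self_sqrt (by positivity)]
    have key : ∑ j, (projF A (KPF v) j) ^ 2
        ≤ (Real.log k) ^ 2 * N ^ 2 + 16 * N ^ 2 := by
      have hper : ∀ j, (projF A (KPF v) j) ^ 2
          ≤ (Real.log k) ^ 2 * v j ^ 2 + (if j ∈ A then 16 * N ^ 2 / k else 0) := by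
        intro j
        by_cases hj : j ∈ A
        · rw [projF_mem hj, if_pos hj]
          by_cases hvj : v j = 0
          · rw [KPF_apply_zero hvj]
            have : (0:ℝ) ≤ 16 * N ^2 / k := by positivity
            nlinarith [sq_nonneg (Real.log k * v j)]
          · rw [KPF_apply_ne hvj]
            have habs : 0 < |v j| := abs_pos.mpr hvj
            have hle : |v j| ≤ N := abs_le_l2 v j
            set t := |v j| / N with htdef
            have ht0 : 0 < t := by positivity
            have ht1 : t ≤ 1 := (div_le_one hNpos).mpr hle
            have hsq : (v j * Real.log t) ^ 2 = v j ^ 2 * (Real.log t) ^ 2 := by ring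
            rw [hsq]
            by_cases hcase : 1 / (k:ℝ) ≤ t
            · have hlogt : |Real.log t| ≤ Real.log k := by
                rw [abs_of_nonpos (Real.log_nonpos (le_of_lt ht0) ht1)]
                have h1 : Real.log (1 / (k:ℝ)) ≤ Real.log t :=
                  Real.log_le_log (by positivity) hcase
                rw [Real.log_div one_ne_zero (ne_of_gt hkpos), Real.log_one] at h1
                linarith
              have h2 : (Real.log t) ^ 2 ≤ (Real.log k) ^ 2 := by
                rw [← sq_abs (Real.log t)]
                exact pow_le_pow_left₀ (abs_nonneg _) hlogt 2
              have h3 : (0:ℝ) ≤ 16 * N ^ 2 / k := by positivity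
              nlinarith [sq_nonneg (v j)]
            · push_neg at hcase
              have h4 : v j ^ 2 * Real.log t ^ 2 = N ^ 2 * (t * (t * Real.log t ^ 2)) := by
                have hts : t * N = |v j| := by
                  rw [htdef]; field_simp
                have : v j ^ 2 = N ^ 2 * t ^ 2 := by
                  calc v j ^ 2 = |v j| ^ 2 := (sq_abs _).symm
                    _ = (t * N) ^ 2 := by rw [hts]
                    _ = N ^ 2 * t ^ 2 := by ring
                rw [this]; ring
              rw [h4]
              have h5 : t * Real.log t ^ 2 ≤ 16 := mul_sq_log_le ht0 ht1
              have h6 : t * (t * Real.log t ^ 2) ≤ (1/k) * 16 := by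
                apply mul_le_mul (le_of_lt hcase) h5 _ (by positivity)
                positivity
              have h7 : N ^ 2 * (t * (t * Real.log t ^2)) ≤ N ^2 * ((1/k) * 16) := by
                apply mul_le_mul_of_nonneg_left h6 (by positivity)
              have h8 : (0:ℝ) ≤ Real.log k ^ 2 * v j ^2 := by positivity
              have h9 : N ^2 * ((1/(k:ℝ))*16) = 16 * N^2/k := by ring
              linarith
        · rw [projF_not_mem hj, if_neg hj]
          have : (0:ℝ) ≤ Real.log k ^ 2 * v j ^ 2 := by positivity
          simpa using this
      calc ∑ j, (projF A (KPF v) j) ^ 2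
          ≤ ∑ j, ((Real.log k) ^ 2 * v j ^ 2 + (if j ∈ A then 16 * N ^ 2 / k else 0)) :=
            Finset.sum_le_sum (fun j _ => hper j)
        _ = (Real.log k) ^ 2 * (∑ j, v j ^ 2)
            + ∑ j, (if j ∈ A then 16 * N ^ 2 / k else 0) := by
            rw [Finset.sum_add_distrib, Finset.mul_sum]
        _ ≤ (Real.log k) ^ 2 * N ^ 2 + 16 * N ^ 2 := by
            have h1 : ∑ j, (if j ∈ A then 16 * N ^ 2 / k else 0) = A.card * (16 * N^2/k) := by
              rw [Finset.sum_ite_mem]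
              rw [Finset.univ_inter, Finset.sum_const, nsmul_eq_mul]
            rw [h1, ← hNsq]
            have h2 : (A.card : ℝ) * (16 * N^2/k) ≤ k * (16 * N^2/k) := by
              apply mul_le_mul_of_nonneg_right _ (by positivity)
              exact_mod_cast hA
            have h3 : (k:ℝ) * (16 * N^2/k) = 16 * N^2 := by field_simp
            linarith
    have hfinal : (Real.log k) ^2 * N^2 + 16*N^2 ≤ (6 * Real.log k * N)^2 := by
      have h1 : (0:ℝ) ≤ N^2 := sq_nonneg N
      nlinarith [sq_nonneg (Real.log k - 0.6931), sq_nonneg N, sq_nonneg (Real.log k * N)]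
    calc l2 (projF A (KPF v)) = Real.sqrt (∑ j, (projF A (KPF v) j)^2) := rfl
      _ ≤ Real.sqrt ((6 * Real.log k * N)^2) := Real.sqrt_le_sqrt (by linarith)
      _ = |6 * Real.log k * N| := Real.sqrt_sq_eq_abs _
      _ = 6 * Real.log k * N := by
          apply abs_of_nonneg
          nlinarith [mul_pos (lt_of_lt_of_le (by norm_num : (0:ℝ) < 0.6931) hlogk) hNpos]
/-- commutator-type estimate for the restricted multiplier -/
lemma KPF_commutator (A : Finset (Fin n)) (γ u : Fin n → ℝ) (g : ℝ) (hg0 : 0 ≤ g)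
    (hg : ∀ j ∈ A, |γ j| ≤ g) :
    l2 (projF A (fun j => γ j * KPF (projF A u) j - KPF (fun i => γ i * u i) j))
      ≤ 2 * l2 (fun i => γ i * u i) + 2 * (g * l2 (projF A u)) := by
  classical
  set c := projF A u with hc
  set gu : Fin n → ℝ := fun i => γ i * u i with hgu
  set y := projF A gu with hy
  set m := l2 y with hm
  set N := l2 gu with hNdef
  set Nc := l2 c with hNc
  have hNnn : 0 ≤ N := l2_nonneg _
  have hNcnn : 0 ≤ Nc := l2_nonneg _
  have hmN : m ≤ N := l2_projF_le A gu
  have hmgc : m ≤ g * Nc := by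
    have h := l2_mono (u := y) (v := g • c) (fun j => by
      by_cases hj : j ∈ A
      · rw [hy, projF_mem hj, show (g • c) j = g * c j from rfl, hc, projF_mem hj]
        rw [hgu]
        rw [abs_mul, abs_mul, abs_of_nonneg hg0]
        exact mul_le_mul_of_nonneg_right (hg j hj) (abs_nonneg _)
      · rw [hy, projF_not_mem hj, show (g • c) j = g * c j from rfl, hc, projF_not_mem hj]
        simp)
    rw [l2_smul, abs_of_nonneg hg0] at h
    exact h
  have hzero_case : ∀ j, y j = 0 →
      projF A (fun j => γ j * KPF c j - KPF gu j) j = 0 := by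
    intro j hyj
    by_cases hj : j ∈ A
    · rw [projF_mem hj]
      rw [hy, projF_mem hj] at hyj
      have hguj : γ j * u j = 0 := hyj
      have h2 : KPF gu j = 0 := KPF_apply_zero hguj
      rcases mul_eq_zero.mp hguj with h | h
      · rw [h2, h]; ring
      · have hcj : c j = 0 := by rw [hc, projF_mem hj]; exact h
        rw [h2, KPF_apply_zero hcj]; ring
    · exact projF_not_mem hj
  by_cases hm0 : m = 0
  · have hy0 : y = 0 := l2_eq_zero hm0
    have : projF A (fun j => γ j * KPF c j - KPF gu j) = 0 := by
      funext j
      exact (hzero_case j (by rw [hy0]; rfl))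
    rw [show (fun j => γ j * KPF (projF A u) j - KPF (fun i => γ i * u i) j)
        = (fun j => γ j * KPF c j - KPF gu j) from rfl, this, l2_zero]
    nlinarith [mul_nonneg hg0 hNcnn]
  · have hmpos : 0 < m := lt_of_le_of_ne (l2_nonneg y) (Ne.symm hm0)
    have hNpos : 0 < N := lt_of_lt_of_le hmpos hmN
    have hgNcpos : 0 < g * Nc := lt_of_lt_of_le hmpos hmgc
    have hgpos : 0 < g := by
      rcases lt_or_eq_of_le hg0 with h | h
      · exact h
      · exfalso; rw [← h, zero_mul] at hgNcpos; exact lt_irrefl 0 hgNcpos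
    have hNcpos : 0 < Nc := by nlinarith
    set T1 := (Real.log N - Real.log m) • y with hT1
    set T2 := (Real.log m - Real.log (g * Nc)) • y with hT2
    have hT1le : l2 T1 ≤ N := by
      rw [hT1, l2_smul]
      have habs : |Real.log N - Real.log m| = |Real.log (m / N)| := by
        rw [Real.log_div (ne_of_gt hmpos) (ne_of_gt hNpos), abs_sub_comm]
      rw [habs, mul_comm]
      exact mul_abs_log_div_le hmpos hmN
    have hT2le : l2 T2 ≤ g * Nc := by
      rw [hT2, l2_smul]
      have habs : |Real.log m - Real.log (g * Nc)| = |Real.log (m / (g * Nc))| := by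
        rw [Real.log_div (ne_of_gt hmpos) (ne_of_gt hgNcpos)]
      rw [habs, mul_comm]
      exact mul_abs_log_div_le hmpos hmgc
    set T3 : Fin n → ℝ := fun j =>
      projF A (fun i => γ i * KPF c i - KPF gu i) j - T1 j - T2 j with hT3
    have hT3le : l2 T3 ≤ g * Nc := by
      have h := l2_mono (u := T3) (v := g • c) (fun j => by
        rw [show (g • c) j = g * c j from rfl]
        by_cases hj : j ∈ A
        · by_cases hyj : y j = 0
          · have h1 := hzero_case j hyj
            rw [hT3]
            show |projF A (fun i => γ i * KPF c i - KPF gu i) j - T1 j - T2 j| ≤ |g * c j|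
            rw [h1, hT1, hT2]
            show |0 - (Real.log N - Real.log m) * y j
              - (Real.log m - Real.log (g * Nc)) * y j| ≤ |g * c j|
            rw [hyj]
            simpa using abs_nonneg (g * c j)
          · have hguj : γ j * u j ≠ 0 := by
              rw [hy, projF_mem hj] at hyj; exact hyj
            have hγj : γ j ≠ 0 := fun h => hguj (by rw [h, zero_mul])
            have huj : u j ≠ 0 := fun h => hguj (by rw [h, mul_zero])
            have hcj : c j = u j := by rw [hc, projF_mem hj]
            have hcj0 : c j ≠ 0 := by rw [hcj]; exact huj
            have hyval : y j = γ j * u j := by rw [hy, projF_mem hj]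
            have hident : T3 j = γ j * u j * (Real.log g - Real.log |γ j|) := by
              rw [hT3]
              show projF A (fun i => γ i * KPF c i - KPF gu i) j - T1 j - T2 j = _
              rw [projF_mem hj, hT1, hT2]
              show γ j * KPF c j - KPF gu j - (Real.log N - Real.log m) * y j
                - (Real.log m - Real.log (g * Nc)) * y j = _
              rw [KPF_apply_ne hcj0, KPF_apply_ne (show gu j ≠ 0 from hguj), hyval]
              rw [show gu j = γ j * u j from rfl]
              rw [hcj]
              rw [Real.log_div (ne_of_gt (abs_pos.mpr huj)) (ne_of_gt hNcpos),
                  Real.log_div (ne_of_gt (abs_pos.mpr hguj)) (ne_of_gt hNpos),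
                  abs_mul,
                  Real.log_mul (ne_of_gt (abs_pos.mpr hγj)) (ne_of_gt (abs_pos.mpr huj)),
                  Real.log_mul (ne_of_gt hgpos) (ne_of_gt hNcpos)]
              ring
            rw [hident, hcj]
            rw [abs_mul, abs_mul, abs_mul, abs_of_nonneg hg0]
            rw [mul_comm |γ j| |u j|, mul_assoc, mul_comm g |u j|]
            apply mul_le_mul_of_nonneg_left _ (abs_nonneg (u j))
            have habs2 : |Real.log g - Real.log (abs (γ j))| = |Real.log (abs (γ j) / g)| := by
              rw [Real.log_div (ne_of_gt (abs_pos.mpr hγj)) (ne_of_gt hgpos), abs_sub_comm]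
            rw [habs2]
            exact mul_abs_log_div_le (abs_pos.mpr hγj) (hg j hj)
        · rw [hT3]
          show |projF A (fun i => γ i * KPF c i - KPF gu i) j - T1 j - T2 j| ≤ |g * c j|
          rw [projF_not_mem hj, hT1, hT2]
          show |0 - (Real.log N - Real.log m) * y j
            - (Real.log m - Real.log (g * Nc)) * y j| ≤ |g * c j|
          rw [hy, projF_not_mem hj]
          simpa using abs_nonneg (g * c j))
      rw [l2_smul, abs_of_nonneg hg0] at h
      exact h
    have hsplit : projF A (fun j => γ j * KPF c j - KPF gu j) = T1 + T2 + T3 := by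
      funext j
      rw [hT3]
      show projF A (fun i => γ i * KPF c i - KPF gu i) j
        = T1 j + T2 j + (projF A (fun i => γ i * KPF c i - KPF gu i) j - T1 j - T2 j)
      ring
    calc l2 (projF A (fun j => γ j * KPF (projF A u) j - KPF (fun i => γ i * u i) j))
        = l2 (T1 + T2 + T3) := by rw [← hsplit]
      _ ≤ l2 (T1 + T2) + l2 T3 := l2_add_le _ _
      _ ≤ l2 T1 + l2 T2 + l2 T3 := by
          have := l2_add_le T1 T2; linarith
      _ ≤ N + (g * Nc) + (g * Nc) := by
          have := hT1le; have := hT2le; have := hT3le; linarith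
      _ ≤ 2 * N + 2 * (g * Nc) := by linarith
lemma single_eq_smul_single (j : Fin n) (c : ℝ) :
    (Pi.single j c : Fin n → ℝ) = c • (Pi.single j (1:ℝ) : Fin n → ℝ) := by
  funext i
  rw [Pi.smul_apply, Pi.single_apply, Pi.single_apply]
  by_cases h : i = j <;> simp [h]

lemma T_apply (T : ((Fin n → ℝ) × (Fin n → ℝ)) →ₗ[ℝ] ((Fin n → ℝ) × (Fin n → ℝ)))
    (α β γ δ : Fin n → ℝ)
    (hT : ∀ j : Fin n,
      T (Pi.single j 1, 0) = (Pi.single j (α j), Pi.single j (γ j)) ∧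
      T (0, Pi.single j 1) = (Pi.single j (β j), Pi.single j (δ j)))
    (x y : Fin n → ℝ) :
    T (x, y) = (fun i => α i * x i + β i * y i, fun i => γ i * x i + δ i * y i) := by
  classical
  have hdecomp : ((x, y) : (Fin n → ℝ) × (Fin n → ℝ))
      = (∑ j, ((Pi.single j (x j) : Fin n → ℝ), (0 : Fin n → ℝ)))
        + ∑ j, ((0 : Fin n → ℝ), (Pi.single j (y j) : Fin n → ℝ)) := by
    apply Prod.ext
    · rw [Prod.fst_add, Prod.fst_sum, Prod.fst_sum]
      simp only
      rw [Finset.univ_sum_single x]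
      simp
    · rw [Prod.snd_add, Prod.snd_sum, Prod.snd_sum]
      simp only
      rw [Finset.univ_sum_single y]
      simp
  rw [hdecomp, map_add, map_sum, map_sum]
  have hx : ∀ j, T ((Pi.single j (x j) : Fin n → ℝ), (0 : Fin n → ℝ))
      = ((Pi.single j (x j * α j) : Fin n → ℝ), (Pi.single j (x j * γ j) : Fin n → ℝ)) := by
    intro j
    have h1 : ((Pi.single j (x j) : Fin n → ℝ), (0 : Fin n → ℝ))
        = x j • (((Pi.single j 1 : Fin n → ℝ)), (0 : Fin n → ℝ)) := by
      rw [Prod.smul_mk, smul_zero, ← single_eq_smul_single]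
    rw [h1, map_smul, (hT j).1, Prod.smul_mk]
    apply Prod.ext
    · simp only
      rw [single_eq_smul_single j (α j), single_eq_smul_single j (x j * α j),
        smul_smul]
    · simp only
      rw [single_eq_smul_single j (γ j), single_eq_smul_single j (x j * γ j),
        smul_smul]
  have hy : ∀ j, T ((0 : Fin n → ℝ), (Pi.single j (y j) : Fin n → ℝ))
      = ((Pi.single j (y j * β j) : Fin n → ℝ), (Pi.single j (y j * δ j) : Fin n → ℝ)) := by
    intro j
    have h1 : ((0 : Fin n → ℝ), (Pi.single j (y j) : Fin n → ℝ))
        = y j • ((0 : Fin n → ℝ), ((Pi.single j 1 : Fin n → ℝ))) := by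
      rw [Prod.smul_mk, smul_zero, ← single_eq_smul_single]
    rw [h1, map_smul, (hT j).2, Prod.smul_mk]
    apply Prod.ext
    · simp only
      rw [single_eq_smul_single j (β j), single_eq_smul_single j (y j * β j),
        smul_smul]
    · simp only
      rw [single_eq_smul_single j (δ j), single_eq_smul_single j (y j * δ j),
        smul_smul]
  rw [Finset.sum_congr rfl (fun j _ => hx j), Finset.sum_congr rfl (fun j _ => hy j)]
  apply Prod.ext
  · rw [Prod.fst_add, Prod.fst_sum, Prod.fst_sum]
    simp only
    rw [show (∑ j, (Pi.single j (x j * α j) : Fin n → ℝ)) = fun i => x i * α i from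
      Finset.univ_sum_single (fun i => x i * α i)]
    rw [show (∑ j, (Pi.single j (y j * β j) : Fin n → ℝ)) = fun i => y i * β i from
      Finset.univ_sum_single (fun i => y i * β i)]
    funext i
    show x i * α i + y i * β i = α i * x i + β i * y i
    ring
  · rw [Prod.snd_add, Prod.snd_sum, Prod.snd_sum]
    simp only
    rw [show (∑ j, (Pi.single j (x j * γ j) : Fin n → ℝ)) = fun i => x i * γ i from
      Finset.univ_sum_single (fun i => x i * γ i)]
    rw [show (∑ j, (Pi.single j (y j * δ j) : Fin n → ℝ)) = fun i => y i * δ i from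
      Finset.univ_sum_single (fun i => y i * δ i)]
    funext i
    show x i * γ i + y i * δ i = γ i * x i + δ i * y i
    ring
variable {n : ℕ}

lemma znorm_mk (p q : Fin n → ℝ) : znorm (p, q) = l2 q + l2 (p - KPF q) := rfl

lemma znorm_nonneg (x : (Fin n → ℝ) × (Fin n → ℝ)) : 0 ≤ znorm x :=
  add_nonneg (l2_nonneg _) (l2_nonneg _)

lemma l2_snd_le_znorm (x : (Fin n → ℝ) × (Fin n → ℝ)) : l2 x.2 ≤ znorm x := by
  have := l2_nonneg (x.1 - KPF x.2); rw [znorm]; linarith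

lemma l2_sub_KPF_le_znorm (x : (Fin n → ℝ) × (Fin n → ℝ)) :
    l2 (x.1 - KPF x.2) ≤ znorm x := by
  have := l2_nonneg x.2; rw [znorm]; linarith

lemma znorm_zero : znorm ((0 : (Fin n → ℝ) × (Fin n → ℝ))) = 0 := by
  rw [show ((0 : (Fin n → ℝ) × (Fin n → ℝ))) = ((0 : Fin n → ℝ), (0 : Fin n → ℝ)) from rfl,
    znorm_mk, KPF_zero, sub_zero, l2_zero]
  ring

lemma znorm_pos {x : (Fin n → ℝ) × (Fin n → ℝ)} (h : x ≠ 0) : 0 < znorm x := by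
  by_cases h2 : x.2 = 0
  · have h1 : x.1 ≠ 0 := by
      intro h1
      exact h (Prod.ext h1 h2)
    rw [znorm, h2, KPF_zero, sub_zero, l2_zero]
    have := l2_pos h1
    linarith
  · have := l2_pos h2
    have := l2_nonneg (x.1 - KPF x.2)
    rw [znorm]; linarith

lemma znorm_graph (b : Fin n → ℝ) : znorm (KPF b, b) = l2 b := by
  rw [znorm_mk, sub_self, l2_zero, add_zero]

lemma znorm_single_pair (j : Fin n) (p q : ℝ) :
    znorm ((Pi.single j p : Fin n → ℝ), (Pi.single j q : Fin n → ℝ)) = |q| + |p| := by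
  rw [znorm_mk, KPF_single, sub_zero, l2_single, l2_single]

lemma znorm_e1 (j : Fin n) : znorm ((Pi.single j 1 : Fin n → ℝ), (0 : Fin n → ℝ)) = 1 := by
  rw [znorm_mk, KPF_zero, sub_zero, l2_zero, l2_single]
  norm_num

lemma znorm_e2 (j : Fin n) : znorm ((0 : Fin n → ℝ), (Pi.single j 1 : Fin n → ℝ)) = 1 := by
  rw [znorm_mk, KPF_single, sub_zero, l2_zero, l2_single]
  norm_num

lemma l2_KPF_le (v : Fin n → ℝ) : l2 (KPF v) ≤ Real.sqrt n * l2 v := by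
  have h1 : ∀ j, (KPF v j) ^ 2 ≤ (l2 v) ^ 2 := by
    intro j
    rw [← sq_abs (KPF v j)]
    exact pow_le_pow_left₀ (abs_nonneg _) (abs_KPF_le v j) 2
  calc l2 (KPF v) = Real.sqrt (∑ j, (KPF v j) ^ 2) := rfl
    _ ≤ Real.sqrt (∑ _j : Fin n, (l2 v) ^ 2) :=
        Real.sqrt_le_sqrt (Finset.sum_le_sum (fun j _ => h1 j))
    _ = Real.sqrt (n * (l2 v) ^ 2) := by
        rw [Finset.sum_const, Finset.card_univ, Fintype.card_fin, nsmul_eq_mul]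
    _ = Real.sqrt n * l2 v := by
        rw [Real.sqrt_mul (by positivity), Real.sqrt_sq (l2_nonneg v)]

section Operator
variable (T : ((Fin n → ℝ) × (Fin n → ℝ)) →ₗ[ℝ] ((Fin n → ℝ) × (Fin n → ℝ)))
    (α β γ δ : Fin n → ℝ)
    (hT : ∀ j : Fin n,
      T (Pi.single j 1, 0) = (Pi.single j (α j), Pi.single j (γ j)) ∧
      T (0, Pi.single j 1) = (Pi.single j (β j), Pi.single j (δ j)))

include hT

lemma znorm_T_le_aux (x : (Fin n → ℝ) × (Fin n → ℝ)) :
    znorm (T x) ≤ ((1 + Real.sqrt n) ^ 2 * (l2 α + l2 β + l2 γ + l2 δ)) * znorm x := by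
  obtain ⟨x1, x2⟩ := x
  set S := 1 + Real.sqrt n with hS
  have hS1 : 1 ≤ S := by
    have := Real.sqrt_nonneg (n:ℝ); rw [hS]; linarith
  have hS0 : 0 ≤ S := by linarith
  set Z := znorm (x1, x2) with hZ
  have hZ0 : 0 ≤ Z := znorm_nonneg _
  rw [T_apply T α β γ δ hT x1 x2]
  set p : Fin n → ℝ := fun i => α i * x1 i + β i * x2 i with hp
  set q : Fin n → ℝ := fun i => γ i * x1 i + δ i * x2 i with hq
  have h1 : znorm (p, q) ≤ l2 p + S * l2 q := by
    rw [znorm_mk]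
    have h2 : l2 (p - KPF q) ≤ l2 p + l2 (KPF q) := l2_sub_le p (KPF q)
    have h3 : l2 (KPF q) ≤ Real.sqrt n * l2 q := l2_KPF_le q
    have h4 : 0 ≤ l2 q := l2_nonneg q
    rw [hS]
    nlinarith
  have h2 : l2 p ≤ l2 α * l2 x1 + l2 β * l2 x2 := by
    have ha : p = (fun i => α i * x1 i) + (fun i => β i * x2 i) := rfl
    rw [ha]
    calc l2 ((fun i => α i * x1 i) + (fun i => β i * x2 i))
        ≤ l2 (fun i => α i * x1 i) + l2 (fun i => β i * x2 i) := l2_add_le _ _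
      _ ≤ l2 α * l2 x1 + l2 β * l2 x2 := add_le_add (l2_mul_le α x1) (l2_mul_le β x2)
  have h3 : l2 q ≤ l2 γ * l2 x1 + l2 δ * l2 x2 := by
    have ha : q = (fun i => γ i * x1 i) + (fun i => δ i * x2 i) := rfl
    rw [ha]
    calc l2 ((fun i => γ i * x1 i) + (fun i => δ i * x2 i))
        ≤ l2 (fun i => γ i * x1 i) + l2 (fun i => δ i * x2 i) := l2_add_le _ _
      _ ≤ l2 γ * l2 x1 + l2 δ * l2 x2 := add_le_add (l2_mul_le γ x1) (l2_mul_le δ x2)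
  have h4 : l2 x1 ≤ S * Z := by
    have ha : l2 x1 ≤ l2 (x1 - KPF x2) + l2 (KPF x2) := by
      have hb : x1 = (x1 - KPF x2) + KPF x2 := by funext i; simp
      calc l2 x1 = l2 ((x1 - KPF x2) + KPF x2) := by rw [← hb]
        _ ≤ l2 (x1 - KPF x2) + l2 (KPF x2) := l2_add_le _ _
    have hb : l2 (x1 - KPF x2) ≤ Z := l2_sub_KPF_le_znorm (x1, x2)
    have hc : l2 (KPF x2) ≤ Real.sqrt n * l2 x2 := l2_KPF_le x2
    have hd : l2 x2 ≤ Z := l2_snd_le_znorm (x1, x2)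
    have he : Real.sqrt n * l2 x2 ≤ Real.sqrt n * Z :=
      mul_le_mul_of_nonneg_left hd (Real.sqrt_nonneg _)
    rw [hS]
    nlinarith
  have h5 : l2 x2 ≤ Z := l2_snd_le_znorm (x1, x2)
  have ha0 := l2_nonneg α
  have hb0 := l2_nonneg β
  have hc0 := l2_nonneg γ
  have hd0 := l2_nonneg δ
  have hx10 := l2_nonneg x1
  have hx20 := l2_nonneg x2
  have hq0 := l2_nonneg q
  have hp0 := l2_nonneg p
  calc znorm (p, q) ≤ l2 p + S * l2 q := h1
    _ ≤ (l2 α * l2 x1 + l2 β * l2 x2) + S * (l2 γ * l2 x1 + l2 δ * l2 x2) := by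
        have := mul_le_mul_of_nonneg_left h3 hS0
        linarith
    _ ≤ l2 α * (S*Z) + l2 β * Z + S * (l2 γ * (S*Z) + l2 δ * Z) := by
        have e1 := mul_le_mul_of_nonneg_left h4 ha0
        have e2 := mul_le_mul_of_nonneg_left h5 hb0
        have e3 := mul_le_mul_of_nonneg_left h4 hc0
        have e4 := mul_le_mul_of_nonneg_left h5 hd0
        have e5 : l2 γ * l2 x1 + l2 δ * l2 x2 ≤ l2 γ * (S*Z) + l2 δ * Z := by linarith
        have e6 := mul_le_mul_of_nonneg_left e5 hS0
        linarith
    _ ≤ S ^ 2 * (l2 α + l2 β + l2 γ + l2 δ) * Z := by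
        have f1 : (0:ℝ) ≤ S^2 - S := by nlinarith
        have f2 : (0:ℝ) ≤ S^2 - 1 := by nlinarith
        nlinarith [mul_nonneg (mul_nonneg ha0 hZ0) f1, mul_nonneg (mul_nonneg hb0 hZ0) f2,
          mul_nonneg (mul_nonneg hd0 hZ0) f1, mul_nonneg (mul_nonneg hc0 hZ0) f1]

lemma ratio_bdd :
    BddAbove (Set.range fun x : {x : (Fin n → ℝ) × (Fin n → ℝ) // x ≠ 0} =>
      znorm (T x.1) / znorm x.1) := by
  refine ⟨(1 + Real.sqrt n) ^ 2 * (l2 α + l2 β + l2 γ + l2 δ), ?_⟩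
  rintro r ⟨x, rfl⟩
  have hpos := znorm_pos x.2
  rw [div_le_iff₀ hpos]
  exact znorm_T_le_aux T α β γ δ hT x.1

lemma znorm_T_le (x : (Fin n → ℝ) × (Fin n → ℝ)) :
    znorm (T x) ≤ ratioSup znorm znorm (fun z => T z) * znorm x := by
  by_cases hx : x = 0
  · subst hx
    rw [map_zero, znorm_zero, mul_zero]
  · have hpos := znorm_pos hx
    have hle := le_ciSup (ratio_bdd T α β γ δ hT) (⟨x, hx⟩ : {x : (Fin n → ℝ) × (Fin n → ℝ) // x ≠ 0})
    rw [ratioSup]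
    rw [div_le_iff₀ hpos] at hle
    exact hle

lemma ratioSup_nonneg (hn : 1 ≤ n) :
    0 ≤ ratioSup znorm znorm (fun z : (Fin n → ℝ) × (Fin n → ℝ) => T z) := by
  have j0 : Fin n := ⟨0, hn⟩
  set x0 : (Fin n → ℝ) × (Fin n → ℝ) := ((Pi.single j0 1 : Fin n → ℝ), 0) with hx0
  have hx0ne : x0 ≠ 0 := by
    intro h
    have h1 := congrFun (congrArg Prod.fst h) j0
    rw [hx0] at h1
    simp at h1
  have h0 : 0 ≤ znorm (T x0) / znorm x0 :=
    div_nonneg (znorm_nonneg _) (znorm_nonneg _)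
  have hle := le_ciSup (ratio_bdd T α β γ δ hT) (⟨x0, hx0ne⟩ : {x : (Fin n → ℝ) × (Fin n → ℝ) // x ≠ 0})
  exact le_trans h0 hle

lemma coef_bounds (j : Fin n) :
    |α j| ≤ ratioSup znorm znorm (fun z : (Fin n → ℝ) × (Fin n → ℝ) => T z) ∧
    |β j| ≤ ratioSup znorm znorm (fun z : (Fin n → ℝ) × (Fin n → ℝ) => T z) ∧
    |γ j| ≤ ratioSup znorm znorm (fun z : (Fin n → ℝ) × (Fin n → ℝ) => T z) ∧
    |δ j| ≤ ratioSup znorm znorm (fun z : (Fin n → ℝ) × (Fin n → ℝ) => T z) := by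
  set h := ratioSup znorm znorm (fun z : (Fin n → ℝ) × (Fin n → ℝ) => T z) with hh
  have h1 : znorm (T ((Pi.single j 1 : Fin n → ℝ), 0)) ≤ h * 1 := by
    have := znorm_T_le T α β γ δ hT ((Pi.single j 1 : Fin n → ℝ), 0)
    rw [znorm_e1] at this
    exact this
  rw [(hT j).1, znorm_single_pair] at h1
  have h2 : znorm (T (0, (Pi.single j 1 : Fin n → ℝ))) ≤ h * 1 := by
    have := znorm_T_le T α β γ δ hT (0, (Pi.single j 1 : Fin n → ℝ))
    rw [znorm_e2] at this
    exact this
  rw [(hT j).2, znorm_single_pair] at h2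
  have ha := abs_nonneg (α j)
  have hb := abs_nonneg (β j)
  have hc := abs_nonneg (γ j)
  have hd := abs_nonneg (δ j)
  refine ⟨by linarith, by linarith, by linarith, by linarith⟩

end Operator
end KP

set_option maxHeartbeats 2000000 in
/-- Uniform estimate for splitting operators `T` on `Z_2^n`: if `a` is supported on a set
`A'` of cardinality at most `k` on which `|γ_j| ≤ 4√2‖T‖/log k`, then
`‖(δ−α)a + γF(a)‖₂ ≤ C‖T‖·‖(a,b)‖_{Z_2^n}`. -/
theorem split_supported_estimate :
    ∃ C : ℝ, 0 < C ∧ ∀ n : ℕ, 1 ≤ n →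
      ∀ (T : ((Fin n → ℝ) × (Fin n → ℝ)) →ₗ[ℝ] ((Fin n → ℝ) × (Fin n → ℝ)))
        (α β γ δ : Fin n → ℝ),
        (∀ j : Fin n,
          T (Pi.single j 1, 0) = (Pi.single j (α j), Pi.single j (γ j)) ∧
          T (0, Pi.single j 1) = (Pi.single j (β j), Pi.single j (δ j))) →
        ∀ k : ℕ, 2 ≤ k →
        ∀ A' : Finset (Fin n), A'.card ≤ k →
          (∀ j ∈ A', |γ j| ≤
            4 * Real.sqrt 2 * ratioSup znorm znorm (fun x => T x) / Real.log (k : ℝ)) →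
          ∀ a b : Fin n → ℝ, a ≠ 0 → (∀ j : Fin n, a j ≠ 0 → j ∈ A') →
            Real.sqrt (∑ j, (δ j * a j - α j * a j + γ j * KPF a j) ^ 2) ≤
              C * ratioSup znorm znorm (fun x => T x) * znorm (a, b) := by
  classical
  refine ⟨400, by norm_num, ?_⟩
  intro n hn T α β γ δ hT k hk A hA hγ a b ha hsupp
  set h := ratioSup znorm znorm (fun x => T x) with hh
  have hh0 : 0 ≤ h := KP.ratioSup_nonneg T α β γ δ hT hn
  have hα : ∀ j, |α j| ≤ h := fun j => (KP.coef_bounds T α β γ δ hT j).1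
  have hβ : ∀ j, |β j| ≤ h := fun j => (KP.coef_bounds T α β γ δ hT j).2.1
  have hγh : ∀ j, |γ j| ≤ h := fun j => (KP.coef_bounds T α β γ δ hT j).2.2.1
  have hδ : ∀ j, |δ j| ≤ h := fun j => (KP.coef_bounds T α β γ δ hT j).2.2.2
  have hzT : ∀ x, znorm (T x) ≤ h * znorm x := fun x => KP.znorm_T_le T α β γ δ hT x
  clear_value h
  set g := 4 * Real.sqrt 2 * h / Real.log (k:ℝ) with hgdef
  clear_value g
  have hL : (0.6931:ℝ) ≤ Real.log k := KP.log_k_pos hk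
  have hLpos : (0:ℝ) < Real.log k := by linarith
  have hs2 : Real.sqrt 2 ≤ 1.5 := by
    rw [show (1.5:ℝ) = Real.sqrt (1.5^2) from (Real.sqrt_sq (by norm_num)).symm]
    apply Real.sqrt_le_sqrt; norm_num
  have hs20 : (0:ℝ) ≤ Real.sqrt 2 := Real.sqrt_nonneg 2
  have hg0 : 0 ≤ g := by
    rw [hgdef]
    apply div_nonneg _ (le_of_lt hLpos)
    positivity
  have hgl : g * Real.log k = 4 * Real.sqrt 2 * h := by
    rw [hgdef]; field_simp
  -- main vectors
  set u := KPF b with hu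
  set w := a - u with hw
  set c := KP.projF A u with hc
  set pw := KP.projF A w with hpw
  set gu : Fin n → ℝ := fun i => γ i * u i with hgu
  set db : Fin n → ℝ := fun i => δ i * b i with hdb
  set Ψ : Fin n → ℝ := fun i => γ i * u i + δ i * b i with hΨ
  set P1 : Fin n → ℝ := fun i => α i * u i + β i * b i with hP1
  set r2 := P1 - KPF Ψ with hr2
  set q1 := KPF a - KPF c - KPF pw with hq1
  set q2 := KPF Ψ - KPF gu - KPF db with hq2
  set B := l2 b with hB
  set W := l2 w with hWdef
  clear_value u w c pw gu db Ψ P1 r2 q1 q2 B W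
  have hB0 : 0 ≤ B := by rw [hB]; exact KP.l2_nonneg b
  have hW0 : 0 ≤ W := by rw [hWdef]; exact KP.l2_nonneg w
  have hD : znorm (a, b) = B + W := by
    rw [KP.znorm_mk, hB, hWdef, hw, hu]
  -- operator estimates at (u, b)
  have hTub : T (u, b) = (P1, Ψ) := by
    rw [hP1, hΨ, hu]
    exact KP.T_apply T α β γ δ hT (KPF b) b
  have hzub : znorm (P1, Ψ) ≤ h * B := by
    have h1 := hzT (u, b)
    rw [hTub, hu, KP.znorm_graph, ← hB] at h1
    exact h1
  have hΨle : l2 Ψ ≤ h * B := by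
    have h1 := KP.l2_snd_le_znorm (P1, Ψ)
    exact le_trans h1 hzub
  have hr2le : l2 r2 ≤ h * B := by
    have h1 := KP.l2_sub_KPF_le_znorm (P1, Ψ)
    rw [hr2]
    exact le_trans h1 hzub
  have hdble : l2 db ≤ h * B := by
    rw [hB]
    have h1 : l2 db ≤ l2 (h • b) := by
      apply KP.l2_mono
      intro j
      rw [hdb]
      show |δ j * b j| ≤ |h * b j|
      rw [abs_mul, abs_mul, abs_of_nonneg hh0]
      exact mul_le_mul_of_nonneg_right (hδ j) (abs_nonneg _)
    rw [KP.l2_smul, abs_of_nonneg hh0] at h1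
    exact h1
  have hβble : l2 (fun i => β i * b i) ≤ h * B := by
    rw [hB]
    have h1 : l2 (fun i => β i * b i) ≤ l2 (h • b) := by
      apply KP.l2_mono
      intro j
      show |β j * b j| ≤ |h * b j|
      rw [abs_mul, abs_mul, abs_of_nonneg hh0]
      exact mul_le_mul_of_nonneg_right (hβ j) (abs_nonneg _)
    rw [KP.l2_smul, abs_of_nonneg hh0] at h1
    exact h1
  have hgule : l2 gu ≤ 2 * (h * B) := by
    have h1 : gu = Ψ - db := by
      funext i
      rw [hgu, hΨ, hdb]
      show γ i * u i = (γ i * u i + δ i * b i) - δ i * b i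
      ring
    rw [h1]
    calc l2 (Ψ - db) ≤ l2 Ψ + l2 db := KP.l2_sub_le Ψ db
      _ ≤ 2 * (h * B) := by linarith
  have hcle : l2 c ≤ 6 * Real.log k * B := by
    rw [hc, hu, hB]
    exact KP.l2_projF_KPF_le A k hk hA b
  have hpwle : l2 pw ≤ W := by
    rw [hpw, hWdef]
    exact KP.l2_projF_le A w
  have hKpw : l2 (KPF pw) ≤ 6 * Real.log k * W := by
    have heq : KPF pw = KP.projF A (KPF pw) := by
      funext j
      by_cases hj : j ∈ A
      · rw [KP.projF_mem hj]
      · rw [KP.projF_not_mem hj]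
        apply KP.KPF_apply_zero
        rw [hpw, KP.projF_not_mem hj]
    calc l2 (KPF pw) = l2 (KP.projF A (KPF pw)) := by rw [← heq]
      _ ≤ 6 * Real.log k * l2 pw := KP.l2_projF_KPF_le A k hk hA pw
      _ ≤ 6 * Real.log k * W :=
          mul_le_mul_of_nonneg_left hpwle (by nlinarith)
  -- the eight summands
  set S1 := KP.projF A (fun j => (δ j - α j) * w j) with hS1
  set S2 := KP.projF A (fun j => γ j * KPF pw j) with hS2
  set S3 := KP.projF A (fun j => γ j * q1 j) with hS3
  set S4 := KP.projF A (fun j => γ j * KPF c j - KPF gu j) with hS4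
  set S5 := KP.projF A (fun j => δ j * u j - KPF db j) with hS5
  set S6 := KP.projF A (fun j => -(q2 j)) with hS6
  set S7 := KP.projF A (fun j => β j * b j) with hS7
  set S8 := KP.projF A (fun j => -(r2 j)) with hS8
  -- the identity
  have hID : (fun j => δ j * a j - α j * a j + γ j * KPF a j)
      = S1 + S2 + S3 + S4 + S5 + S6 + S7 + S8 := by
    funext j
    simp only [Pi.add_apply, hS1, hS2, hS3, hS4, hS5, hS6, hS7, hS8]
    by_cases hj : j ∈ A
    · simp only [KP.projF_mem hj, hq1, hq2, hr2, hP1, Pi.sub_apply, hw, hΨ, hgu, hdb]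
      ring
    · have haj : a j = 0 := by
        by_contra hne
        exact hj (hsupp j hne)
      simp only [KP.projF_not_mem hj, haj, KP.KPF_apply_zero haj]
      ring
  -- individual bounds
  have b1 : l2 S1 ≤ 2 * h * W := by
    have h1 : l2 S1 ≤ l2 ((2 * h) • w) := by
      apply KP.l2_mono
      intro j
      have h2 := KP.abs_projF_le A (fun j => (δ j - α j) * w j) j
      rw [← hS1] at h2
      apply le_trans h2
      show |(δ j - α j) * w j| ≤ |2 * h * w j|
      rw [abs_mul, abs_mul]
      apply mul_le_mul_of_nonneg_right _ (abs_nonneg _)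
      have := hα j; have := hδ j
      have h3 := abs_sub (δ j) (α j)
      rw [abs_of_nonneg (by linarith : (0:ℝ) ≤ 2 * h)]
      calc |δ j - α j| ≤ |δ j| + |α j| := abs_sub _ _
        _ ≤ 2 * h := by linarith
    rw [KP.l2_smul, abs_of_nonneg (by linarith : (0:ℝ) ≤ 2 * h)] at h1
    rw [← hWdef] at h1
    linarith
  have b2 : l2 S2 ≤ 36 * (h * W) := by
    have h1 : l2 S2 ≤ l2 (g • KPF pw) := by
      apply KP.l2_mono
      intro j
      have h2 := KP.abs_projF_le A (fun j => γ j * KPF pw j) j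
      rw [← hS2] at h2
      apply le_trans h2
      show |γ j * KPF pw j| ≤ |g * KPF pw j|
      by_cases hj : j ∈ A
      · rw [abs_mul, abs_mul, abs_of_nonneg hg0]
        exact mul_le_mul_of_nonneg_right (hγ j hj) (abs_nonneg _)
      · have hpwj : pw j = 0 := by rw [hpw, KP.projF_not_mem hj]
        rw [KP.KPF_apply_zero hpwj]
        simp
    rw [KP.l2_smul, abs_of_nonneg hg0] at h1
    have h3 : g * l2 (KPF pw) ≤ g * (6 * Real.log k * W) :=
      mul_le_mul_of_nonneg_left hKpw hg0
    have h4 : g * (6 * Real.log k * W) = 6 * W * (g * Real.log k) := by ring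
    rw [h4, hgl] at h3
    nlinarith [mul_nonneg hh0 hW0]
  have b3 : l2 S3 ≤ 216 * (h * B) + 54 * (h * W) := by
    have hacw : a = c + pw := by
      funext j
      by_cases hj : j ∈ A
      · rw [Pi.add_apply, hc, hpw, KP.projF_mem hj, KP.projF_mem hj, hw]
        show a j = u j + (a j - u j)
        ring
      · rw [Pi.add_apply, hc, hpw, KP.projF_not_mem hj, KP.projF_not_mem hj]
        have haj : a j = 0 := by
          by_contra hne
          exact hj (hsupp j hne)
        rw [haj]; norm_num
    have hq1le : l2 q1 ≤ 6 * (l2 c + l2 pw) := by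
      rw [hq1, hacw]
      exact KP.KPF_quasi c pw
    have h1 : l2 S3 ≤ l2 (g • q1) := by
      apply KP.l2_mono
      intro j
      have h2 := KP.abs_projF_le A (fun j => γ j * q1 j) j
      rw [← hS3] at h2
      apply le_trans h2
      show |γ j * q1 j| ≤ |g * q1 j|
      by_cases hj : j ∈ A
      · rw [abs_mul, abs_mul, abs_of_nonneg hg0]
        exact mul_le_mul_of_nonneg_right (hγ j hj) (abs_nonneg _)
      · have haj : a j = 0 := by
          by_contra hne
          exact hj (hsupp j hne)
        have hcj : c j = 0 := by rw [hc, KP.projF_not_mem hj]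
        have hpwj : pw j = 0 := by rw [hpw, KP.projF_not_mem hj]
        have hq1j : q1 j = 0 := by
          rw [hq1, Pi.sub_apply, Pi.sub_apply, KP.KPF_apply_zero haj,
            KP.KPF_apply_zero hcj, KP.KPF_apply_zero hpwj]
          ring
        rw [hq1j]
        simp
    rw [KP.l2_smul, abs_of_nonneg hg0] at h1
    have h3 : g * l2 q1 ≤ g * (6 * (l2 c + l2 pw)) :=
      mul_le_mul_of_nonneg_left hq1le hg0
    have h4 : g * (6 * (l2 c + l2 pw)) ≤ g * (6 * (6 * Real.log k * B + W)) := by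
      apply mul_le_mul_of_nonneg_left _ hg0
      have := hcle; have := hpwle
      linarith
    have h5 : g * (6 * (6 * Real.log k * B + W)) = 36 * B * (g * Real.log k) + 6 * (g * W) := by
      ring
    rw [h5, hgl] at h4
    -- g * W ≤ 9 * h * W  since g = 4√2 h / log k ≤ 6h/0.6931 ≤ 9h
    have hgh : g ≤ 9 * h := by
      rw [hgdef, div_le_iff₀ hLpos]
      nlinarith [mul_nonneg hh0 (by linarith : (0:ℝ) ≤ Real.log k - 0.6931)]
    have h6 : g * W ≤ 9 * h * W := mul_le_mul_of_nonneg_right hgh hW0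
    have h7 : 36 * B * (4 * Real.sqrt 2 * h) ≤ 216 * (h * B) := by
      nlinarith [mul_nonneg hh0 hB0]
    linarith
  have b4 : l2 S4 ≤ 76 * (h * B) := by
    have hcomm := KP.KPF_commutator A γ u g hg0 hγ
    rw [← hc, ← hgu] at hcomm
    rw [← hS4] at hcomm
    have h1 : 2 * l2 gu ≤ 2 * (2 * (h * B)) := by linarith
    have h2 : g * l2 c ≤ g * (6 * Real.log k * B) :=
      mul_le_mul_of_nonneg_left hcle hg0
    have h3 : g * (6 * Real.log k * B) = 6 * B * (g * Real.log k) := by ring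
    rw [h3, hgl] at h2
    have h4 : 6 * B * (4 * Real.sqrt 2 * h) ≤ 36 * (h * B) := by
      nlinarith [mul_nonneg hh0 hB0]
    linarith
  have b5 : l2 S5 ≤ 2 * (h * B) := by
    have h2 := KP.KPF_central δ b h hh0 hδ
    rw [← hdb, ← hB] at h2
    have h1 : l2 S5 ≤ l2 (fun j => δ j * KPF b j - KPF db j) := by
      rw [hS5, hu]
      exact KP.l2_projF_le A _
    linarith
  have b6 : l2 S6 ≤ 18 * (h * B) := by
    have h1 : l2 S6 ≤ l2 q2 := by
      apply KP.l2_mono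
      intro j
      have h2 := KP.abs_projF_le A (fun j => -(q2 j)) j
      rw [← hS6] at h2
      apply le_trans h2
      rw [abs_neg]
    have hΨeq : Ψ = gu + db := by
      funext i
      rw [hΨ, hgu, hdb]
      rfl
    have hq2le : l2 q2 ≤ 6 * (l2 gu + l2 db) := by
      rw [hq2, hΨeq]
      exact KP.KPF_quasi gu db
    have h3 : 6 * (l2 gu + l2 db) ≤ 6 * (2 * (h * B) + h * B) := by
      have := hgule; have := hdble; linarith
    linarith
  have b7 : l2 S7 ≤ h * B := by
    have h1 : l2 S7 ≤ l2 (fun i => β i * b i) := by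
      rw [hS7]
      exact KP.l2_projF_le A _
    linarith
  have b8 : l2 S8 ≤ h * B := by
    have h1 : l2 S8 ≤ l2 r2 := by
      have h2 : l2 S8 ≤ l2 (fun j => -(r2 j)) := by
        rw [hS8]
        exact KP.l2_projF_le A _
      have h3 : l2 (fun j => -(r2 j)) = l2 (-r2) := rfl
      rw [h3, KP.l2_neg] at h2
      exact h2
    linarith
  -- combine
  have htot : l2 (fun j => δ j * a j - α j * a j + γ j * KPF a j)
      ≤ l2 S1 + l2 S2 + l2 S3 + l2 S4 + l2 S5 + l2 S6 + l2 S7 + l2 S8 := by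
    rw [hID]
    calc l2 (S1 + S2 + S3 + S4 + S5 + S6 + S7 + S8)
        ≤ l2 (S1 + S2 + S3 + S4 + S5 + S6 + S7) + l2 S8 := KP.l2_add_le _ _
      _ ≤ l2 (S1 + S2 + S3 + S4 + S5 + S6) + l2 S7 + l2 S8 := by
          have := KP.l2_add_le (S1 + S2 + S3 + S4 + S5 + S6) S7; linarith
      _ ≤ l2 (S1 + S2 + S3 + S4 + S5) + l2 S6 + l2 S7 + l2 S8 := by
          have := KP.l2_add_le (S1 + S2 + S3 + S4 + S5) S6; linarith
      _ ≤ l2 (S1 + S2 + S3 + S4) + l2 S5 + l2 S6 + l2 S7 + l2 S8 := by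
          have := KP.l2_add_le (S1 + S2 + S3 + S4) S5; linarith
      _ ≤ l2 (S1 + S2 + S3) + l2 S4 + l2 S5 + l2 S6 + l2 S7 + l2 S8 := by
          have := KP.l2_add_le (S1 + S2 + S3) S4; linarith
      _ ≤ l2 (S1 + S2) + l2 S3 + l2 S4 + l2 S5 + l2 S6 + l2 S7 + l2 S8 := by
          have := KP.l2_add_le (S1 + S2) S3; linarith
      _ ≤ l2 S1 + l2 S2 + l2 S3 + l2 S4 + l2 S5 + l2 S6 + l2 S7 + l2 S8 := by
          have := KP.l2_add_le S1 S2; linarith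
  have hfin : l2 (fun j => δ j * a j - α j * a j + γ j * KPF a j)
      ≤ 400 * h * (B + W) := by
    have hBW := mul_nonneg hh0 hW0
    have hBB := mul_nonneg hh0 hB0
    linarith
  rw [hD]
  calc Real.sqrt (∑ j, (δ j * a j - α j * a j + γ j * KPF a j) ^ 2)
      = l2 (fun j => δ j * a j - α j * a j + γ j * KPF a j) := rfl
    _ ≤ 400 * h * (B + W) := hfin
end

section
/- Let k ≥ 1 and let ‖·‖_E and ‖·‖_F be two norms on ℝ^k. Let α be a norm on the space of linear endomorphisms of ℝ^k (regarded as operators from (ℝ^k, ‖·‖_E) to (ℝ^k, ‖·‖_F)) satisfying the ideal property α(B ∘ U ∘ A) ≤ ‖B‖_{F→F} · α(U) · ‖A‖_{E→E} for all linear A, B, U, where ‖A‖_{E→E} and ‖B‖_{F→F} are operator norms with respect to ‖·‖_E and ‖·‖_F respectively. Define α*(V) = sup{ trace(V ∘ U)/α(U) : U ≠ 0 } for linear V : ℝ^k → ℝ^k. Let G be a rich compact subgroup of GL_k(ℝ) with normalized Haar measure μ. Then k ≤ α(id) · α*(id) ≤ k · ∫_G ‖g‖_{E→E} · ‖g⁻¹‖_{F→F}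 dμ(g). In particular, if every g ∈ G is an isometry of (ℝ^k, ‖·‖_F), then k ≤ α(id)·α*(id) ≤ k·∫_G ‖g‖_{E→E} dμ(g). -/
open scoped BigOperators

/-- The product σ-algebra (= Borel σ-algebra) on matrices. -/
instance {k m : ℕ} : MeasurableSpace (Matrix (Fin k) (Fin m) ℝ) := MeasurableSpace.pi

/-!
For `U ≠ 0` average its conjugates: `P = ∫ g U g⁻¹ dμ` commutes with `G` by left invariance of `μ`,
so richness forces `P = (trace U / k) • 1`. Jensen's inequality for the convex function `α` and the
ideal property give `|trace U| / k · α(1) = α(P) ≤ α(U) ∫ ‖g‖_{F→F} ‖g⁻¹‖_{E→E} dμ`, and the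
inversion invariance of `μ` turns this integral into the one of the statement. Taking the supremum
over `U` gives the upper bound, `U = 1` the lower one. All integrands are continuous on the compact
set `G` because seminorms on finite-dimensional spaces are convex, hence continuous.
-/

open MeasureTheory Matrix Set

attribute [local instance] Matrix.normedAddCommGroup Matrix.normedSpace

theorem Seminorm.continuous_of_finiteDimensional {E : Type*} [NormedAddCommGroup E]
    [NormedSpace ℝ E] [FiniteDimensional ℝ E] (p : Seminorm ℝ E) : Continuous p :=
  continuousOn_univ.1 (p.convexOn.continuousOn isOpen_univ)

/-- Both quotients are determined by their values on the compact unit sphere. -/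
theorem bddAbove_range_div_of_pos_homogeneous {E : Type*} [NormedAddCommGroup E]
    [NormedSpace ℝ E] [FiniteDimensional ℝ E] {f g : E → ℝ} (hf : Continuous f)
    (hg : Continuous g) (hfh : ∀ c : ℝ, 0 < c → ∀ x, f (c • x) = c * f x)
    (hgh : ∀ c : ℝ, 0 < c → ∀ x, g (c • x) = c * g x) (hg0 : ∀ x ≠ 0, g x ≠ 0) :
    BddAbove (range fun x : {x : E // x ≠ 0} => f x / g x) := by
  obtain ⟨C, hC⟩ := (isCompact_sphere (0 : E) 1).bddAbove_image
    (hf.continuousOn.div hg.continuousOn fun x hx => hg0 x (ne_zero_of_mem_unit_sphere ⟨x, hx⟩))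
  refine ⟨C, ?_⟩
  rintro _ ⟨⟨x, hx⟩, rfl⟩
  have hc : 0 < ‖x‖⁻¹ := inv_pos.2 (norm_pos_iff.2 hx)
  have hxs : ‖x‖⁻¹ • x ∈ Metric.sphere (0 : E) 1 := by simp [norm_smul, hx]
  have := hC ⟨_, hxs, rfl⟩
  rwa [Pi.div_apply, hfh _ hc, hgh _ hc, mul_div_mul_left _ _ hc.ne'] at this

theorem ratioSup_eq_one_of_forall_eq {V W : Type*} [Zero V] [Nontrivial V]
    {NV : V → ℝ} {NW : W → ℝ} {T : V → W} (hT : ∀ x, NW (T x) = NV x)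
    (hV : ∀ x ≠ 0, NV x ≠ 0) : ratioSup NV NW T = 1 := by
  have : Nonempty {x : V // x ≠ 0} := nonempty_subtype.2 (exists_ne 0)
  simp only [ratioSup, hT]
  simp_rw [fun x : {x : V // x ≠ 0} => div_self (hV x.1 x.2), ciSup_const]

section RatioSup

variable {m n : Type*} [Fintype n]

theorem bddAbove_range_ratio_mulVec [Fintype m] {p : Seminorm ℝ (n → ℝ)}
    (q : Seminorm ℝ (m → ℝ)) (hp : ∀ x ≠ 0, p x ≠ 0) (A : Matrix m n ℝ) :
    BddAbove (range fun x : {x : n → ℝ // x ≠ 0} => q (A *ᵥ x.1) / p x.1) :=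
  bddAbove_range_div_of_pos_homogeneous (f := fun x => q (A *ᵥ x)) (g := p)
    (q.continuous_of_finiteDimensional.comp A.mulVecLin.continuous_of_finiteDimensional)
    p.continuous_of_finiteDimensional
    (fun c hc x => by rw [mulVec_smul, map_smul_eq_mul, Real.norm_of_nonneg hc.le])
    (fun c hc x => by rw [map_smul_eq_mul, Real.norm_of_nonneg hc.le]) hp

theorem ratioSup_mulVec_smul (p : Seminorm ℝ (n → ℝ)) (q : Seminorm ℝ (m → ℝ)) (c : ℝ)
    (A : Matrix m n ℝ) : ratioSup p q (c • A).mulVec = ‖c‖ * ratioSup p q A.mulVec := by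
  simp only [ratioSup, Real.mul_iSup_of_nonneg (norm_nonneg c), smul_mulVec, map_smul_eq_mul,
    mul_div_assoc]

theorem ratioSup_mulVec_add_le [Fintype m] [Nonempty n] {p : Seminorm ℝ (n → ℝ)}
    (q : Seminorm ℝ (m → ℝ)) (hp : ∀ x ≠ 0, p x ≠ 0) (A B : Matrix m n ℝ) :
    ratioSup p q (A + B).mulVec ≤ ratioSup p q A.mulVec + ratioSup p q B.mulVec := by
  have : Nonempty {x : n → ℝ // x ≠ 0} := nonempty_subtype.2 (exists_ne 0)
  refine ciSup_le fun x => ?_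
  have hx : 0 < p x.1 := (apply_nonneg p _).lt_of_ne' (hp _ x.2)
  calc q ((A + B) *ᵥ x.1) / p x.1 ≤ q (A *ᵥ x.1) / p x.1 + q (B *ᵥ x.1) / p x.1 := by
        rw [add_mulVec, ← add_div]
        exact div_le_div_of_nonneg_right (map_add_le_add q _ _) hx.le
    _ ≤ _ := add_le_add (le_ciSup (bddAbove_range_ratio_mulVec q hp A) x)
        (le_ciSup (bddAbove_range_ratio_mulVec q hp B) x)

/-- `A ↦ ratioSup p q A.mulVec` is a seminorm, hence continuous. -/
theorem continuous_ratioSup_mulVec [Fintype m] [Nonempty n] {p : Seminorm ℝ (n → ℝ)}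
    (q : Seminorm ℝ (m → ℝ)) (hp : ∀ x ≠ 0, p x ≠ 0) :
    Continuous fun A : Matrix m n ℝ => ratioSup p q A.mulVec :=
  (Seminorm.of _ (ratioSup_mulVec_add_le q hp)
    (ratioSup_mulVec_smul p q)).continuous_of_finiteDimensional

end RatioSup

section ConjNorm

variable {n : Type*} [Fintype n]

/-- The conjugate norm `α*`. -/
noncomputable def conjNorm (a : Matrix n n ℝ → ℝ) (V : Matrix n n ℝ) : ℝ :=
  ⨆ U : {U : Matrix n n ℝ // U ≠ 0}, trace (V * U.1) / a U.1

variable {p : Seminorm ℝ (Matrix n n ℝ)}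

theorem bddAbove_range_trace_mul_div (hp : ∀ U ≠ 0, p U ≠ 0) (V : Matrix n n ℝ) :
    BddAbove (range fun U : {U : Matrix n n ℝ // U ≠ 0} => trace (V * U.1) / p U.1) :=
  bddAbove_range_div_of_pos_homogeneous (f := fun U => trace (V * U)) (g := p)
    (continuous_const.matrix_mul continuous_id).matrix_trace p.continuous_of_finiteDimensional
    (fun c _ U => by rw [Matrix.mul_smul, trace_smul, smul_eq_mul])
    (fun c hc U => by rw [map_smul_eq_mul, Real.norm_of_nonneg hc.le]) hp

theorem card_le_mul_conjNorm_one [DecidableEq n] [Nonempty n] (hp : ∀ U ≠ 0, p U ≠ 0) :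
    (Fintype.card n : ℝ) ≤ p 1 * conjNorm p 1 := by
  have h1 : 0 < p 1 := (apply_nonneg p _).lt_of_ne' (hp 1 one_ne_zero)
  have := le_ciSup (bddAbove_range_trace_mul_div hp 1) ⟨1, one_ne_zero⟩
  rwa [one_mul, trace_one, div_le_iff₀' h1] at this

theorem mul_conjNorm_one_le [DecidableEq n] [Nonempty n] (hp : ∀ U ≠ 0, p U ≠ 0) {C : ℝ}
    (h : ∀ U ≠ 0, trace U * p 1 ≤ C * p U) : p 1 * conjNorm p 1 ≤ C := by
  have h1 : 0 < p 1 := (apply_nonneg p _).lt_of_ne' (hp 1 one_ne_zero)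
  have : Nonempty {U : Matrix n n ℝ // U ≠ 0} := ⟨⟨1, one_ne_zero⟩⟩
  rw [← le_div_iff₀' h1]
  refine ciSup_le fun U => ?_
  rw [one_mul, div_le_div_iff₀ ((apply_nonneg p _).lt_of_ne' (hp _ U.2)) h1]
  exact h U.1 U.2

end ConjNorm

theorem continuousOn_matrix_inv {n : Type*} [Fintype n] [DecidableEq n]
    {G : Set (Matrix n n ℝ)} (hGL : ∀ g ∈ G, IsUnit g) : ContinuousOn (fun g => g⁻¹) G :=
  fun g hg => (continuousAt_matrix_inv g (by
    rw [Ring.inverse_eq_inv']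
    exact continuousAt_inv₀ ((isUnit_iff_isUnit_det g).1 (hGL g hg)).ne_zero)).continuousWithinAt

theorem ContinuousOn.integrable_of_ae_mem {X F : Type*} [TopologicalSpace X] [T2Space X]
    [MeasurableSpace X] [OpensMeasurableSpace X] [NormedAddCommGroup F] {μ : Measure X}
    [IsFiniteMeasure μ] {K : Set X} {f : X → F} (hf : ContinuousOn f K) (hK : IsCompact K)
    (hμK : ∀ᵐ x ∂μ, x ∈ K) : Integrable f μ := by
  rw [← Measure.restrict_eq_self_of_ae_mem hμK]
  exact hf.integrableOn_compact hK

section Haar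

instance {k m : ℕ} : BorelSpace (Matrix (Fin k) (Fin m) ℝ) := Pi.borelSpace

instance {k m : ℕ} : SecondCountableTopology (Matrix (Fin k) (Fin m) ℝ) :=
  inferInstanceAs (SecondCountableTopology (Fin k → Fin m → ℝ))

instance {k : ℕ} : MeasurableMul₂ (Matrix (Fin k) (Fin k) ℝ) := ⟨continuous_mul.measurable⟩

variable {k : ℕ} {G : Set (Matrix (Fin k) (Fin k) ℝ)} {μ : Measure (Matrix (Fin k) (Fin k) ℝ)}

theorem measurable_matrix_inv : Measurable fun g : Matrix (Fin k) (Fin k) ℝ => g⁻¹ := by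
  simp_rw [inv_def, Ring.inverse_eq_inv']
  exact (continuous_id.matrix_det.measurable.inv).smul continuous_id.matrix_adjugate.measurable

/-- Tonelli: compute `∫∫ f (g⁻¹ h) dμ(g) dμ(h)` in both orders. -/
theorem measurePreserving_matrix_inv [IsProbabilityMeasure μ]
    (hGL : ∀ g ∈ G, IsUnit g) (hinv : ∀ g ∈ G, g⁻¹ ∈ G) (hG : ∀ᵐ g ∂μ, g ∈ G)
    (hHaar : ∀ g ∈ G, μ.map (g * ·) = μ) : MeasurePreserving (fun g => g⁻¹) μ μ := by
  refine ⟨measurable_matrix_inv, Measure.ext_of_lintegral _ fun f hf => ?_⟩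
  have hleft : ∀ g ∈ G, ∀ φ : Matrix (Fin k) (Fin k) ℝ → ENNReal, Measurable φ →
      ∫⁻ h, φ (g * h) ∂μ = ∫⁻ h, φ h ∂μ := fun g hg φ hφ => by
    conv_rhs => rw [← hHaar g hg]
    rw [lintegral_map hφ (measurable_const_mul g)]
  rw [lintegral_map hf measurable_matrix_inv]
  calc ∫⁻ g, f g⁻¹ ∂μ = ∫⁻ _h, ∫⁻ g, f g⁻¹ ∂μ ∂μ := by simp
    _ = ∫⁻ h, ∫⁻ g, f ((h * g)⁻¹ * h) ∂μ ∂μ := by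
        refine lintegral_congr_ae (hG.mono fun h hh => ?_)
        simp_rw [Matrix.mul_inv_rev, mul_assoc,
          nonsing_inv_mul h ((isUnit_iff_isUnit_det h).1 (hGL h hh)), mul_one]
    _ = ∫⁻ h, ∫⁻ g, f (g⁻¹ * h) ∂μ ∂μ := by
        refine lintegral_congr_ae (hG.mono fun h hh => ?_)
        exact hleft h hh (fun g => f (g⁻¹ * h)) (hf.comp (measurable_matrix_inv.mul_const h))
    _ = ∫⁻ g, ∫⁻ h, f (g⁻¹ * h) ∂μ ∂μ :=
        lintegral_lintegral_swap
          (hf.comp ((measurable_matrix_inv.comp measurable_snd).mul measurable_fst)).aemeasurable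
    _ = ∫⁻ _g, ∫⁻ h, f h ∂μ ∂μ :=
        lintegral_congr_ae (hG.mono fun g hg => hleft g⁻¹ (hinv g hg) f hf)
    _ = ∫⁻ h, f h ∂μ := by simp

end Haar

section Averaging

variable {k : ℕ} {G : Set (Matrix (Fin k) (Fin k) ℝ)} {μ : Measure (Matrix (Fin k) (Fin k) ℝ)}
  [IsProbabilityMeasure μ]

theorem continuousOn_conj (hGL : ∀ g ∈ G, IsUnit g) (U : Matrix (Fin k) (Fin k) ℝ) :
    ContinuousOn (fun g => g * U * g⁻¹) G :=
  (continuousOn_id.mul continuousOn_const).mul (continuousOn_matrix_inv hGL)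

theorem trace_integral_conj (hcpt : IsCompact G) (hGL : ∀ g ∈ G, IsUnit g)
    (hG : ∀ᵐ g ∂μ, g ∈ G) (U : Matrix (Fin k) (Fin k) ℝ) :
    trace (∫ g, g * U * g⁻¹ ∂μ) = trace U := by
  calc trace (∫ g, g * U * g⁻¹ ∂μ) = ∫ g, trace (g * U * g⁻¹) ∂μ :=
        ((traceLinearMap (Fin k) ℝ ℝ).toContinuousLinearMap.integral_comp_comm
          ((continuousOn_conj hGL U).integrable_of_ae_mem hcpt hG)).symm
    _ = ∫ _g, trace U ∂μ := integral_congr_ae (hG.mono fun g hg => by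
        simp [trace_mul_cycle, nonsing_inv_mul g ((isUnit_iff_isUnit_det g).1 (hGL g hg))])
    _ = trace U := by simp

theorem integral_conj_commute (hcpt : IsCompact G) (hGL : ∀ g ∈ G, IsUnit g)
    (hG : ∀ᵐ g ∂μ, g ∈ G) (hHaar : ∀ g ∈ G, μ.map (g * ·) = μ) (U : Matrix (Fin k) (Fin k) ℝ)
    {g₀ : Matrix (Fin k) (Fin k) ℝ} (hg₀ : g₀ ∈ G) :
    (∫ g, g * U * g⁻¹ ∂μ) * g₀ = g₀ * ∫ g, g * U * g⁻¹ ∂μ := by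
  set P := ∫ g, g * U * g⁻¹ ∂μ
  have hint := (continuousOn_conj hGL U).integrable_of_ae_mem (μ := μ) hcpt hG
  set L := (LinearMap.mulLeft ℝ g₀ ∘ₗ LinearMap.mulRight ℝ g₀⁻¹).toContinuousLinearMap
  have hconj : g₀ * P * g₀⁻¹ = P :=
    calc g₀ * P * g₀⁻¹ = L P := by simp [L, mul_assoc]
      _ = ∫ g, L (g * U * g⁻¹) ∂μ := (L.integral_comp_comm hint).symm
      _ = ∫ g, (g₀ * g) * U * (g₀ * g)⁻¹ ∂μ := by simp [L, Matrix.mul_inv_rev, mul_assoc]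
      _ = ∫ h, h * U * h⁻¹ ∂(μ.map (g₀ * ·)) := (integral_map
          (measurable_const_mul g₀).aemeasurable (by rw [hHaar g₀ hg₀]; exact hint.1)).symm
      _ = P := by rw [hHaar g₀ hg₀]
  calc P * g₀ = g₀ * P * g₀⁻¹ * g₀ := by rw [hconj]
    _ = g₀ * P := by
        rw [mul_assoc, nonsing_inv_mul g₀ ((isUnit_iff_isUnit_det g₀).1 (hGL g₀ hg₀)), mul_one]

theorem integral_conj_eq_smul_one [NeZero k] (hcpt : IsCompact G) (hGL : ∀ g ∈ G, IsUnit g)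
    (hG : ∀ᵐ g ∂μ, g ∈ G) (hHaar : ∀ g ∈ G, μ.map (g * ·) = μ)
    (hrich : ∀ S : Matrix (Fin k) (Fin k) ℝ, (∀ g ∈ G, S * g = g * S) →
      ∃ r : ℝ, S = r • (1 : Matrix (Fin k) (Fin k) ℝ)) (U : Matrix (Fin k) (Fin k) ℝ) :
    ∫ g, g * U * g⁻¹ ∂μ = (trace U / k) • (1 : Matrix (Fin k) (Fin k) ℝ) := by
  obtain ⟨r, hr⟩ := hrich _ fun g₀ hg₀ => integral_conj_commute hcpt hGL hG hHaar U hg₀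
  have htrace := trace_integral_conj (μ := μ) hcpt hGL hG U
  rw [hr, trace_smul, trace_one, Fintype.card_fin, smul_eq_mul] at htrace
  rw [hr, ← htrace, mul_div_cancel_right₀ r (NeZero.ne (k : ℝ))]

/-- Jensen's inequality for the convex function `p`. -/
theorem seminorm_integral_conj_le (p : Seminorm ℝ (Matrix (Fin k) (Fin k) ℝ))
    (hcpt : IsCompact G) (hGL : ∀ g ∈ G, IsUnit g) (hG : ∀ᵐ g ∂μ, g ∈ G)
    {U : Matrix (Fin k) (Fin k) ℝ} {ρ : Matrix (Fin k) (Fin k) ℝ → ℝ} (hρ : Integrable ρ μ)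
    (hbound : ∀ g ∈ G, p (g * U * g⁻¹) ≤ p U * ρ g) :
    p (∫ g, g * U * g⁻¹ ∂μ) ≤ p U * ∫ g, ρ g ∂μ := by
  have hpc := p.continuous_of_finiteDimensional
  have hint : Integrable (fun g => p (g * U * g⁻¹)) μ :=
    (hpc.comp_continuousOn (continuousOn_conj hGL U)).integrable_of_ae_mem hcpt hG
  calc p (∫ g, g * U * g⁻¹ ∂μ) ≤ ∫ g, p (g * U * g⁻¹) ∂μ :=
        p.convexOn.map_integral_le hpc.continuousOn isClosed_univ (by simp)
          ((continuousOn_conj hGL U).integrable_of_ae_mem hcpt hG) hint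
    _ ≤ ∫ g, p U * ρ g ∂μ := integral_mono_ae hint (hρ.const_mul _) (hG.mono hbound)
    _ = p U * ∫ g, ρ g ∂μ := integral_const_mul _ _

theorem trace_mul_seminorm_one_le [NeZero k] (p : Seminorm ℝ (Matrix (Fin k) (Fin k) ℝ))
    (hcpt : IsCompact G) (hGL : ∀ g ∈ G, IsUnit g) (hG : ∀ᵐ g ∂μ, g ∈ G)
    (hHaar : ∀ g ∈ G, μ.map (g * ·) = μ)
    (hrich : ∀ S : Matrix (Fin k) (Fin k) ℝ, (∀ g ∈ G, S * g = g * S) →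
      ∃ r : ℝ, S = r • (1 : Matrix (Fin k) (Fin k) ℝ))
    {U : Matrix (Fin k) (Fin k) ℝ} {ρ : Matrix (Fin k) (Fin k) ℝ → ℝ} (hρ : Integrable ρ μ)
    (hbound : ∀ g ∈ G, p (g * U * g⁻¹) ≤ p U * ρ g) :
    trace U * p 1 ≤ (k * ∫ g, ρ g ∂μ) * p U := by
  have hP := seminorm_integral_conj_le p hcpt hGL hG hρ hbound
  rw [integral_conj_eq_smul_one hcpt hGL hG hHaar hrich, map_smul_eq_mul, Real.norm_eq_abs,
    abs_div, Nat.abs_cast] at hP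
  have hk : (0 : ℝ) < k := Nat.cast_pos.2 (Nat.pos_of_ne_zero (NeZero.ne k))
  calc trace U * p 1 ≤ |trace U| * p 1 := by gcongr; exact le_abs_self _
    _ = k * (|trace U| / k * p 1) := by field_simp
    _ ≤ k * (p U * ∫ g, ρ g ∂μ) := by gcongr
    _ = (k * ∫ g, ρ g ∂μ) * p U := by ring

end Averaging

open MeasureTheory in
theorem ideal_norm_trace_duality_general (k : ℕ) (hk : 1 ≤ k)
    (NE NF : (Fin k → ℝ) → ℝ)
    -- `NE` is a norm:
    (hE0 : ∀ x, NE x = 0 ↔ x = 0) (hEh : ∀ (c : ℝ) (x), NE (c • x) = |c| * NE x)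
    (hEt : ∀ x y, NE (x + y) ≤ NE x + NE y)
    -- `NF` is a norm:
    (hF0 : ∀ x, NF x = 0 ↔ x = 0) (hFh : ∀ (c : ℝ) (x), NF (c • x) = |c| * NF x)
    (hFt : ∀ x y, NF (x + y) ≤ NF x + NF y)
    (a : Matrix (Fin k) (Fin k) ℝ → ℝ)
    -- `α` is a norm on the space of linear endomorphisms of `ℝ^k`:
    (ha0 : ∀ U, a U = 0 ↔ U = 0) (hah : ∀ (c : ℝ) (U), a (c • U) = |c| * a U)
    (hat : ∀ U V, a (U + V) ≤ a U + a V)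
    -- the ideal property `α(B∘U∘A) ≤ ‖B‖_{F→F}·α(U)·‖A‖_{E→E}`:
    (hIdeal : ∀ A B U : Matrix (Fin k) (Fin k) ℝ,
      a (B * U * A) ≤
        ratioSup NF NF (Matrix.mulVec B) * a U * ratioSup NE NE (Matrix.mulVec A))
    (G : Set (Matrix (Fin k) (Fin k) ℝ))
    -- `G` is a compact subgroup of `GL_k(ℝ)`:
    (hGL : ∀ g ∈ G, IsUnit g)
    (hinv : ∀ g ∈ G, g⁻¹ ∈ G)
    (hcpt : IsCompact G)
    -- `G` is rich:
    (hrich : ∀ S : Matrix (Fin k) (Fin k) ℝ, (∀ g ∈ G, S * g = g * S) →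
      ∃ r : ℝ, S = r • (1 : Matrix (Fin k) (Fin k) ℝ))
    -- `μ` is the normalized Haar probability measure of `G`:
    (μ : Measure (Matrix (Fin k) (Fin k) ℝ))
    (hprob : IsProbabilityMeasure μ) (hsupp : μ Gᶜ = 0)
    (hHaar : ∀ g ∈ G, Measure.map (fun h => g * h) μ = μ) :
    ((k : ℝ) ≤
      a 1 * (⨆ U : {U : Matrix (Fin k) (Fin k) ℝ // U ≠ 0},
        Matrix.trace ((1 : Matrix (Fin k) (Fin k) ℝ) * U.1) / a U.1) ∧
    a 1 * (⨆ U : {U : Matrix (Fin k) (Fin k) ℝ // U ≠ 0},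
        Matrix.trace ((1 : Matrix (Fin k) (Fin k) ℝ) * U.1) / a U.1) ≤
      (k : ℝ) * ∫ g, ratioSup NE NE (Matrix.mulVec g) *
        ratioSup NF NF (Matrix.mulVec g⁻¹) ∂μ) ∧
    ((∀ g ∈ G, ∀ x, NF (Matrix.mulVec g x) = NF x) →
      a 1 * (⨆ U : {U : Matrix (Fin k) (Fin k) ℝ // U ≠ 0},
        Matrix.trace ((1 : Matrix (Fin k) (Fin k) ℝ) * U.1) / a U.1) ≤
      (k : ℝ) * ∫ g, ratioSup NE NE (Matrix.mulVec g) ∂μ) := by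
  have : NeZero k := ⟨by omega⟩
  let pE := Seminorm.of (𝕜 := ℝ) NE hEt fun c x => by rw [hEh, Real.norm_eq_abs]
  let pF := Seminorm.of (𝕜 := ℝ) NF hFt fun c x => by rw [hFh, Real.norm_eq_abs]
  let pa := Seminorm.of (𝕜 := ℝ) a hat fun c U => by rw [hah, Real.norm_eq_abs]
  have hE : ∀ x ≠ 0, pE x ≠ 0 := fun x => (hE0 x).not.2
  have hF : ∀ x ≠ 0, pF x ≠ 0 := fun x => (hF0 x).not.2
  have ha : ∀ U ≠ 0, pa U ≠ 0 := fun U => (ha0 U).not.2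
  have hG : ∀ᵐ g ∂μ, g ∈ G := mem_ae_iff.2 hsupp
  have hinvμ := measurePreserving_matrix_inv hGL hinv hG hHaar
  set w := fun g : Matrix (Fin k) (Fin k) ℝ => ratioSup NE NE g.mulVec * ratioSup NF NF g⁻¹.mulVec
  have hw : Integrable w μ := ((continuous_ratioSup_mulVec pE hE).continuousOn.mul
    ((continuous_ratioSup_mulVec pF hF).comp_continuousOn (continuousOn_matrix_inv hGL))
    ).integrable_of_ae_mem hcpt hG
  have hw_inv : ∫ g, w g⁻¹ ∂μ = ∫ g, w g ∂μ := by
    rw [← integral_map hinvμ.measurable.aemeasurable (by rw [hinvμ.map_eq]; exact hw.1),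
      hinvμ.map_eq]
  have hdual : pa 1 * conjNorm pa 1 ≤ k * ∫ g, w g ∂μ := by
    refine mul_conjNorm_one_le ha fun U _ => hw_inv ▸ trace_mul_seminorm_one_le pa hcpt hGL hG
      hHaar hrich (hinvμ.integrable_comp_of_integrable hw) fun g hg => ?_
    have hg' : g⁻¹⁻¹ = g := nonsing_inv_nonsing_inv g ((isUnit_iff_isUnit_det g).1 (hGL g hg))
    change a (g * U * g⁻¹) ≤ a U * (ratioSup NE NE g⁻¹.mulVec * ratioSup NF NF g⁻¹⁻¹.mulVec)
    rw [hg']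
    exact (hIdeal g⁻¹ g U).trans_eq (by ring)
  have hcard : (k : ℝ) ≤ pa 1 * conjNorm pa 1 := by
    simpa using card_le_mul_conjNorm_one (p := pa) ha
  refine ⟨⟨hcard, hdual⟩, fun hiso => hdual.trans_eq ?_⟩
  congr 1
  refine integral_congr_ae (hG.mono fun g hg => ?_)
  simp only [w, ratioSup_eq_one_of_forall_eq (hiso _ (hinv g hg)) hF, mul_one]

open MeasureTheory in
/-- Trace-duality lemma for ideal norms: if `α` is an ideal norm on operators from
`E = (ℝ^k, NE)` to `F = (ℝ^k, NF)`, with conjugate ideal norm `α*`, and `G` is a rich compact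
subgroup of `GL_k(ℝ)` with normalized Haar measure `μ`, then
`k ≤ α(id)·α*(id) ≤ k·∫_G ‖g‖_{E→E}·‖g⁻¹‖_{F→F} dμ(g)`; in particular if every `g ∈ G` is an
isometry of `F` then `k ≤ α(id)·α*(id) ≤ k·∫_G ‖g‖_{E→E} dμ(g)`. -/
theorem ideal_norm_trace_duality (k : ℕ) (hk : 1 ≤ k)
    (NE NF : (Fin k → ℝ) → ℝ)
    -- `NE` is a norm:
    (hE0 : ∀ x, NE x = 0 ↔ x = 0) (hEh : ∀ (c : ℝ) (x), NE (c • x) = |c| * NE x)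
    (hEt : ∀ x y, NE (x + y) ≤ NE x + NE y)
    -- `NF` is a norm:
    (hF0 : ∀ x, NF x = 0 ↔ x = 0) (hFh : ∀ (c : ℝ) (x), NF (c • x) = |c| * NF x)
    (hFt : ∀ x y, NF (x + y) ≤ NF x + NF y)
    (a : Matrix (Fin k) (Fin k) ℝ → ℝ)
    -- `α` is a norm on the space of linear endomorphisms of `ℝ^k`:
    (ha0 : ∀ U, a U = 0 ↔ U = 0) (hah : ∀ (c : ℝ) (U), a (c • U) = |c| * a U)
    (hat : ∀ U V, a (U + V) ≤ a U + a V)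
    -- the ideal property `α(B∘U∘A) ≤ ‖B‖_{F→F}·α(U)·‖A‖_{E→E}`:
    (hIdeal : ∀ A B U : Matrix (Fin k) (Fin k) ℝ,
      a (B * U * A) ≤
        ratioSup NF NF (Matrix.mulVec B) * a U * ratioSup NE NE (Matrix.mulVec A))
    (G : Set (Matrix (Fin k) (Fin k) ℝ))
    -- `G` is a compact subgroup of `GL_k(ℝ)`:
    (hGL : ∀ g ∈ G, IsUnit g)
    (hone : (1 : Matrix (Fin k) (Fin k) ℝ) ∈ G)
    (hmul : ∀ g ∈ G, ∀ h ∈ G, g * h ∈ G)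
    (hinv : ∀ g ∈ G, g⁻¹ ∈ G)
    (hcpt : IsCompact G)
    -- `G` is rich:
    (hrich : ∀ S : Matrix (Fin k) (Fin k) ℝ, (∀ g ∈ G, S * g = g * S) →
      ∃ r : ℝ, S = r • (1 : Matrix (Fin k) (Fin k) ℝ))
    -- `μ` is the normalized Haar probability measure of `G`:
    (μ : Measure (Matrix (Fin k) (Fin k) ℝ))
    (hprob : IsProbabilityMeasure μ) (hsupp : μ Gᶜ = 0)
    (hHaar : ∀ g ∈ G, Measure.map (fun h => g * h) μ = μ) :
    ((k : ℝ) ≤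
      a 1 * (⨆ U : {U : Matrix (Fin k) (Fin k) ℝ // U ≠ 0},
        Matrix.trace ((1 : Matrix (Fin k) (Fin k) ℝ) * U.1) / a U.1) ∧
    a 1 * (⨆ U : {U : Matrix (Fin k) (Fin k) ℝ // U ≠ 0},
        Matrix.trace ((1 : Matrix (Fin k) (Fin k) ℝ) * U.1) / a U.1) ≤
      (k : ℝ) * ∫ g, ratioSup NE NE (Matrix.mulVec g) *
        ratioSup NF NF (Matrix.mulVec g⁻¹) ∂μ) ∧
    ((∀ g ∈ G, ∀ x, NF (Matrix.mulVec g x) = NF x) →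
      a 1 * (⨆ U : {U : Matrix (Fin k) (Fin k) ℝ // U ≠ 0},
        Matrix.trace ((1 : Matrix (Fin k) (Fin k) ℝ) * U.1) / a U.1) ≤
      (k : ℝ) * ∫ g, ratioSup NE NE (Matrix.mulVec g) ∂μ) :=
  ideal_norm_trace_duality_general k hk NE NF hE0 hEh hEt hF0 hFh hFt a ha0 hah hat hIdeal G hGL
    hinv hcpt hrich μ hprob hsupp hHaar
end

section
/- There exists a constant c > 0 such that for every n ≥ 2, the identity map I from Z_2^n to ℓ_2^{2n} (sending (a,b) ∈ ℝⁿ×ℝⁿ to itself with the Euclidean norm) satisfies Π₁(I) ≥ c·√n·log n. -/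
open scoped BigOperators

/-- The Euclidean norm on `ℝⁿ × ℝⁿ ≅ ℝ^{2n}`. -/
noncomputable def l2p {n : ℕ} (x : (Fin n → ℝ) × (Fin n → ℝ)) : ℝ :=
  Real.sqrt ((∑ j, x.1 j ^ 2) + ∑ j, x.2 j ^ 2)

/-- The 1-summing norm `Π₁(u)` of a map `u` between spaces equipped with
(quasi-)norms `N_V`, `N_W`: the least `C > 0` such that
`∑ᵢ N_W(u xᵢ) ≤ C · max_{ε ∈ {−1,1}^m} N_V(∑ᵢ εᵢ xᵢ)` for all finite families `x`. -/
noncomputable def pi1 {V W : Type*} [AddCommGroup V] [Module ℝ V]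
    (NV : V → ℝ) (NW : W → ℝ) (u : V → W) : ℝ :=
  sInf {C : ℝ | 0 < C ∧ ∀ (m : ℕ) (x : Fin m → V),
    ∑ i, NW (u (x i)) ≤ C * ⨆ ε : Fin m → Bool,
      NV (∑ i, (if ε i then (1 : ℝ) else -1) • x i)}

/-! Every coordinate of `(a, b)` is dominated by the Kalton–Peck quasi-norm (for `F(b)_j` because
`|t log t| ≤ 1` on `(0, 1]`), so `Π₁` is finite. For the lower bound take
`x_j = (−(log n / 2) e_j, e_j)`: each has Euclidean length at least `log n / 2`, while a signed
sum is `(−(log n / 2) c, c)` with `c ∈ {±1}ⁿ`, and `F(c) = c log(1/√n) = −(log n / 2) c`, so its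
quasi-norm is `‖c‖₂ = √n`. Hence `Π₁ ≥ n (log n / 2) / √n`. -/

section OneSumming

variable {V W : Type*} [AddCommGroup V] [Module ℝ V]

def IsOneSummingConstant (NV : V → ℝ) (NW : W → ℝ) (u : V → W) (C : ℝ) : Prop :=
  0 < C ∧ ∀ (m : ℕ) (x : Fin m → V),
    ∑ i, NW (u (x i)) ≤ C * ⨆ ε : Fin m → Bool,
      NV (∑ i, (if ε i then (1 : ℝ) else -1) • x i)

theorem pi1_eq_sInf (NV : V → ℝ) (NW : W → ℝ) (u : V → W) :
    pi1 NV NW u = sInf {C | IsOneSummingConstant NV NW u C} := rfl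

theorem exists_sign_sum_eq_sum_abs {m : ℕ} (f : V →ₗ[ℝ] ℝ) (x : Fin m → V) :
    ∃ ε : Fin m → Bool,
      f (∑ i, (if ε i then (1 : ℝ) else -1) • x i) = ∑ i, |f (x i)| := by
  refine ⟨fun i => decide (0 ≤ f (x i)), ?_⟩
  simp only [map_sum, map_smul, smul_eq_mul]
  refine Finset.sum_congr rfl fun i _ => ?_
  rcases le_or_gt 0 (f (x i)) with h | h
  · simp [h, abs_of_nonneg h]
  · simp [not_le.2 h, abs_of_neg h]

theorem exists_isOneSummingConstant {ι : Type*} [Fintype ι] (φ : V →ₗ[ℝ] ι → ℝ)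
    {NV : V → ℝ} {NW : W → ℝ} {u : V → W} (hNV : ∀ v, 0 ≤ NV v)
    (hNW : ∀ v, NW (u v) ≤ ∑ k, |φ v k|) (hφ : ∀ v k, |φ v k| ≤ NV v) :
    ∃ C, IsOneSummingConstant NV NW u C := by
  refine ⟨Fintype.card ι + 1, by positivity, fun m x => ?_⟩
  set S := ⨆ ε : Fin m → Bool, NV (∑ i, (if ε i then (1 : ℝ) else -1) • x i)
  have hS : ∀ ε : Fin m → Bool, NV (∑ i, (if ε i then (1 : ℝ) else -1) • x i) ≤ S :=
    le_ciSup (Set.finite_range _).bddAbove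
  have hS0 : 0 ≤ S := (hNV _).trans (hS fun _ => true)
  have hcoord : ∀ k, ∑ i, |φ (x i) k| ≤ S := fun k => by
    obtain ⟨ε, hε⟩ := exists_sign_sum_eq_sum_abs ((LinearMap.proj k).comp φ) x
    simp only [LinearMap.coe_comp, Function.comp_apply, LinearMap.coe_proj,
      Function.eval] at hε
    exact hε ▸ (le_abs_self _).trans ((hφ _ k).trans (hS ε))
  calc ∑ i, NW (u (x i)) ≤ ∑ i, ∑ k, |φ (x i) k| := Finset.sum_le_sum fun i _ => hNW _
    _ = ∑ k, ∑ i, |φ (x i) k| := Finset.sum_comm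
    _ ≤ ∑ _k : ι, S := Finset.sum_le_sum fun k _ => hcoord k
    _ ≤ (Fintype.card ι + 1) * S := by
      rw [Finset.sum_const, Finset.card_univ, nsmul_eq_mul]
      nlinarith

theorem div_le_pi1 {NV : V → ℝ} {NW : W → ℝ} {u : V → W}
    (hu : ∃ C, IsOneSummingConstant NV NW u C) {m : ℕ} (x : Fin m → V) {A B : ℝ}
    (hA : A ≤ ∑ i, NW (u (x i))) (hB : 0 < B)
    (hsigns : ∀ ε : Fin m → Bool, NV (∑ i, (if ε i then (1 : ℝ) else -1) • x i) ≤ B) :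
    A / B ≤ pi1 NV NW u := by
  rw [pi1_eq_sInf]
  refine le_csInf hu fun C ⟨hC, hsum⟩ => ?_
  rw [div_le_iff₀ hB]
  calc A ≤ ∑ i, NW (u (x i)) := hA
    _ ≤ C * ⨆ ε : Fin m → Bool, NV (∑ i, (if ε i then (1 : ℝ) else -1) • x i) := hsum m x
    _ ≤ C * B := mul_le_mul_of_nonneg_left (ciSup_le hsigns) hC.le

end OneSumming

section KaltonPeck

variable {n : ℕ}

@[simp]
theorem l2_zero : l2 (0 : Fin n → ℝ) = 0 := by
  simp [l2]

theorem abs_le_l2 (b : Fin n → ℝ) (j : Fin n) : |b j| ≤ l2 b := by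
  rw [← Real.sqrt_sq_eq_abs]
  exact Real.sqrt_le_sqrt (Finset.single_le_sum (fun i _ => sq_nonneg (b i)) (Finset.mem_univ j))

/-- `|t log t| < 1` on `(0, 1]`, applied to `t = |b_j| / ‖b‖₂`. -/
theorem abs_KPF_le_l2 (b : Fin n → ℝ) (j : Fin n) : |KPF b j| ≤ l2 b := by
  unfold KPF
  split_ifs with h
  · rw [abs_zero]
    exact Real.sqrt_nonneg _
  have hbj : 0 < |b j| := abs_pos.2 h
  have hl : 0 < l2 b := hbj.trans_le (abs_le_l2 b j)
  have ht : 0 < |b j| / l2 b := div_pos hbj hl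
  have key := Real.abs_log_mul_self_lt _ ht ((div_le_one hl).2 (abs_le_l2 b j))
  calc |b j * Real.log (|b j| / l2 b)| = l2 b * |Real.log (|b j| / l2 b) * (|b j| / l2 b)| := by
        rw [abs_mul, abs_mul, abs_of_pos ht]
        field_simp
    _ ≤ l2 b := mul_le_of_le_one_right hl.le key.le

theorem abs_fst_le_znorm (x : (Fin n → ℝ) × (Fin n → ℝ)) (j : Fin n) : |x.1 j| ≤ znorm x :=
  calc |x.1 j| ≤ |(x.1 - KPF x.2) j| + |KPF x.2 j| := by
        simpa using abs_add_le ((x.1 - KPF x.2) j) (KPF x.2 j)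
    _ ≤ l2 (x.1 - KPF x.2) + l2 x.2 := add_le_add (abs_le_l2 _ j) (abs_KPF_le_l2 _ j)
    _ = znorm x := add_comm _ _

theorem abs_snd_le_znorm (x : (Fin n → ℝ) × (Fin n → ℝ)) (j : Fin n) : |x.2 j| ≤ znorm x :=
  (abs_le_l2 _ j).trans (le_add_of_nonneg_right (Real.sqrt_nonneg _))

theorem abs_fst_le_l2p (x : (Fin n → ℝ) × (Fin n → ℝ)) (j : Fin n) : |x.1 j| ≤ l2p x :=
  (abs_le_l2 _ j).trans
    (Real.sqrt_le_sqrt (le_add_of_nonneg_right (Finset.sum_nonneg fun _ _ => sq_nonneg _)))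

theorem sqrt_sum_sq_le_sum_abs {ι : Type*} (s : Finset ι) (f : ι → ℝ) :
    Real.sqrt (∑ i ∈ s, f i ^ 2) ≤ ∑ i ∈ s, |f i| := by
  rw [Real.sqrt_le_left (Finset.sum_nonneg fun _ _ => abs_nonneg _)]
  simpa only [sq_abs] using Finset.sum_sq_le_sq_sum_of_nonneg fun i _ => abs_nonneg (f i)

def coords (n : ℕ) : (Fin n → ℝ) × (Fin n → ℝ) →ₗ[ℝ] Fin n ⊕ Fin n → ℝ :=
  (LinearEquiv.sumArrowLequivProdArrow (Fin n) (Fin n) ℝ ℝ).symm.toLinearMap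

@[simp]
theorem coords_inl (x : (Fin n → ℝ) × (Fin n → ℝ)) (j : Fin n) : coords n x (.inl j) = x.1 j :=
  LinearEquiv.sumArrowLequivProdArrow_symm_apply_inl x.1 x.2 j

@[simp]
theorem coords_inr (x : (Fin n → ℝ) × (Fin n → ℝ)) (j : Fin n) : coords n x (.inr j) = x.2 j :=
  LinearEquiv.sumArrowLequivProdArrow_symm_apply_inr x.1 x.2 j

theorem l2p_le_sum_abs_coords (x : (Fin n → ℝ) × (Fin n → ℝ)) :
    l2p x ≤ ∑ k, |coords n x k| := by
  simpa [l2p, Fintype.sum_sum_type] using sqrt_sum_sq_le_sum_abs Finset.univ (coords n x)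

theorem abs_coords_le_znorm (x : (Fin n → ℝ) × (Fin n → ℝ)) (k : Fin n ⊕ Fin n) :
    |coords n x k| ≤ znorm x := by
  rcases k with j | j
  · simpa using abs_fst_le_znorm x j
  · simpa using abs_snd_le_znorm x j

theorem exists_isOneSummingConstant_znorm_l2p (n : ℕ) :
    ∃ C, IsOneSummingConstant znorm l2p (fun x : (Fin n → ℝ) × (Fin n → ℝ) => x) C :=
  exists_isOneSummingConstant (coords n) (fun _ => add_nonneg (Real.sqrt_nonneg _)
    (Real.sqrt_nonneg _)) l2p_le_sum_abs_coords abs_coords_le_znorm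

end KaltonPeck

section TestFamily

variable {n : ℕ}

theorem l2_eq_sqrt_of_abs_eq_one {c : Fin n → ℝ} (hc : ∀ k, |c k| = 1) : l2 c = Real.sqrt n := by
  simp [l2, ← sq_abs, hc]

theorem KPF_eq_smul_of_abs_eq_one {c : Fin n → ℝ} (hc : ∀ k, |c k| = 1) :
    KPF c = (-(Real.log n / 2)) • c := by
  funext k
  have hck : c k ≠ 0 := fun h => by simpa [h] using hc k
  simp [KPF, hck, hc, l2_eq_sqrt_of_abs_eq_one hc, Real.log_sqrt (Nat.cast_nonneg n), mul_comm]

/-- `b ↦ (−(log n / 2) b, b)`: on sign vectors it is the graph of `F`, which is where the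
quasi-norm collapses to `‖b‖₂`. -/
noncomputable def kpGraph (n : ℕ) : (Fin n → ℝ) →ₗ[ℝ] (Fin n → ℝ) × (Fin n → ℝ) :=
  ((-(Real.log n / 2)) • LinearMap.id).prod LinearMap.id

theorem znorm_kpGraph_of_abs_eq_one {c : Fin n → ℝ} (hc : ∀ k, |c k| = 1) :
    znorm (kpGraph n c) = Real.sqrt n := by
  simp [znorm, kpGraph, KPF_eq_smul_of_abs_eq_one hc, l2_eq_sqrt_of_abs_eq_one hc]

theorem sign_sum_kpGraph_single (ε : Fin n → Bool) :
    ∑ i, (if ε i then (1 : ℝ) else -1) • kpGraph n (Pi.single i 1) =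
      kpGraph n (fun i => if ε i then 1 else -1) := by
  simp only [← map_smul, ← map_sum]
  exact congrArg _ (pi_eq_sum_univ' _).symm

theorem znorm_sign_sum_kpGraph_single (ε : Fin n → Bool) :
    znorm (∑ i, (if ε i then (1 : ℝ) else -1) • kpGraph n (Pi.single i 1)) = Real.sqrt n := by
  rw [sign_sum_kpGraph_single, znorm_kpGraph_of_abs_eq_one]
  intro i
  cases ε i <;> simp

theorem log_div_two_le_l2p_kpGraph_single (j : Fin n) :
    Real.log n / 2 ≤ l2p (kpGraph n (Pi.single j 1)) :=
  calc Real.log n / 2 ≤ |(kpGraph n (Pi.single j 1)).1 j| := by simp [kpGraph, le_abs_self]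
    _ ≤ l2p (kpGraph n (Pi.single j 1)) := abs_fst_le_l2p _ j

end TestFamily

/-- The 1-summing norm of the identity `Z_2^n → ℓ_2^{2n}` is at least `c·√n·log n`. -/
theorem pi1_znorm_to_l2_lower :
    ∃ c : ℝ, 0 < c ∧ ∀ n : ℕ, 2 ≤ n →
      c * Real.sqrt n * Real.log n ≤
        pi1 znorm l2p (fun x : (Fin n → ℝ) × (Fin n → ℝ) => x) := by
  refine ⟨1 / 2, by norm_num, fun n hn => ?_⟩
  have hsqrt : 0 < Real.sqrt n := Real.sqrt_pos.2 (by exact_mod_cast (by omega : 0 < n))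
  have hsum : n * (Real.log n / 2) ≤ ∑ j : Fin n, l2p (kpGraph n (Pi.single j 1)) := by
    simpa using Finset.sum_le_sum fun j (_ : j ∈ Finset.univ) =>
      log_div_two_le_l2p_kpGraph_single (n := n) j
  have key := div_le_pi1 (exists_isOneSummingConstant_znorm_l2p n) _ hsum hsqrt
    fun ε => (znorm_sign_sum_kpGraph_single ε).le
  calc 1 / 2 * Real.sqrt n * Real.log n = n * (Real.log n / 2) / Real.sqrt n := by
        field_simp
        rw [Real.sq_sqrt (Nat.cast_nonneg n), mul_comm]
    _ ≤ _ := key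
end
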